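/- arXiv:2002.09157 — 7 statements merged into one kernel-verified Lean document; each statement's English description precedes it below -/
import Mathlib

section
/- There exists a finite constant c_n depending only on the space dimension n such that for every hard-sphere flow of N particles of radius a>0 in ℝ^n (with only binary collisions and finitely many collisions in every time slab), the family of numbers |v'−v|, indexed by all kinks of the flow over all time, is summable and satisfies ∑_{kinks} |v'−v| ≤ c_n · N² · 𝐯, where v and v' are the incoming and outgoing velocities at the kink and 𝐯 is the standard deviation of the velocity distribution. -/
open scoped BigOperators RealInnerProductSpace
open Filter

noncomputable section

/-- A hard-sphere flow of `N` identical particles of radius `a > 0` and unit mass in `ℝⁿ`,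
with only binary collisions and finitely many collisions in every time slab.
`y α` is the (continuous, piecewise affine) center trajectory of particle `α`,
`v α t` is its outgoing velocity (the right derivative of `y α` at `t`) and
`vIn α t` its incoming velocity (the left limit of the velocity at `t`).
A *kink* of particle `α` is a time `t` with `vIn α t ≠ v α t`. -/
structure HardSphereFlow (n N : ℕ) where
  /-- the common radius of the spheres -/
  a : ℝ
  a_pos : 0 < a
  /-- center trajectories -/
  y : Fin N → ℝ → EuclideanSpace ℝ (Fin n)
  /-- outgoing (right) velocities -/
  v : Fin N → ℝ → EuclideanSpace ℝ (Fin n)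
  /-- incoming (left) velocities -/
  vIn : Fin N → ℝ → EuclideanSpace ℝ (Fin n)
  y_continuous : ∀ α, Continuous (y α)
  /-- `v α t` is the right derivative of `y α` at `t` -/
  v_right_deriv : ∀ α t, HasDerivWithinAt (y α) (v α t) (Set.Ici t) t
  /-- `vIn α t` is the left limit of the velocity at `t` -/
  vIn_left_limit : ∀ α t, ∀ᶠ s in nhdsWithin t (Set.Iio t), v α s = vIn α t
  /-- the velocity is constant between consecutive kinks, and the motion is affine there -/
  piecewise_affine : ∀ (α : Fin N) (s t : ℝ), s ≤ t →
    (∀ u, s < u → u ≤ t → vIn α u = v α u) →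
    v α t = v α s ∧ y α t = y α s + (t - s) • v α s
  /-- the set of kink times is finite in every time slab -/
  kinks_finite : ∀ (α : Fin N) (t₁ t₂ : ℝ),
    {t | t ∈ Set.Icc t₁ t₂ ∧ vIn α t ≠ v α t}.Finite
  /-- hard spheres never overlap -/
  no_overlap : ∀ (t : ℝ) (α β : Fin N), α ≠ β → 2 * a ≤ dist (y β t) (y α t)
  /-- at a kink of particle `α` there is exactly one particle touching it -/
  partner_unique : ∀ (α : Fin N) (t : ℝ), vIn α t ≠ v α t →
    ∃! β : Fin N, β ≠ α ∧ dist (y β t) (y α t) = 2 * a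
  /-- at a kink, the touching particle also has a kink, and the collision rules hold:
  conservation of momentum and of kinetic energy, frictionless (normal) exchange of
  momentum, and the approach/separation inequalities -/
  collision_rules : ∀ (α β : Fin N) (t : ℝ), vIn α t ≠ v α t → β ≠ α →
    dist (y β t) (y α t) = 2 * a →
      vIn β t ≠ v β t ∧
      v α t + v β t = vIn α t + vIn β t ∧
      ‖v α t‖ ^ 2 + ‖v β t‖ ^ 2 = ‖vIn α t‖ ^ 2 + ‖vIn β t‖ ^ 2 ∧
      v α t - vIn α t = vIn β t - v β t ∧
      (∃ c : ℝ, v α t - vIn α t = c • (y β t - y α t)) ∧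
      ⟪vIn β t - vIn α t, y β t - y α t⟫ < 0 ∧
      0 < ⟪v β t - v α t, y β t - y α t⟫
  /-- no two distinct collisions occur at the same time -/
  one_collision_at_a_time : ∀ (t : ℝ) (α β : Fin N),
    vIn α t ≠ v α t → vIn β t ≠ v β t → β ≠ α →
    dist (y β t) (y α t) = 2 * a

namespace HardSphereFlow

variable {n N : ℕ} (F : HardSphereFlow n N)

/-- The set of kink times of particle `α`. -/
def KinkTimes (α : Fin N) : Set ℝ := {t : ℝ | F.vIn α t ≠ F.v α t}

/-- The set of all kinks `(α, t*)` of the flow. -/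
def Kinks : Set (Fin N × ℝ) := {p : Fin N × ℝ | F.vIn p.1 p.2 ≠ F.v p.1 p.2}

/-- The total energy `E = ½ ∑ |v_α(0)|²`. -/
def totalEnergy : ℝ := (1 / 2) * ∑ α : Fin N, ‖F.v α 0‖ ^ 2

/-- The mean velocity `w = Q/N`. -/
def meanVelocity : EuclideanSpace ℝ (Fin n) := (N : ℝ)⁻¹ • ∑ α : Fin N, F.v α 0

/-- The root mean square velocity `v̄ = √(2E/N)`. -/
def vbar : ℝ := Real.sqrt (2 * F.totalEnergy / N)

/-- The standard deviation `𝐯 = √(v̄² - |w|²)` of the velocity distribution. -/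
def vdev : ℝ := Real.sqrt (F.vbar ^ 2 - ‖F.meanVelocity‖ ^ 2)

end HardSphereFlow

/-- `wedge u u' = |u ∧ u'| = √(|u|²|u'|² - (u⋅u')²)`, the area of the parallelogram
spanned by `u` and `u'`. -/
def wedge {E : Type*} [NormedAddCommGroup E] [InnerProductSpace ℝ E] (u u' : E) : ℝ :=
  Real.sqrt (‖u‖ ^ 2 * ‖u'‖ ^ 2 - (⟪u, u'⟫ : ℝ) ^ 2)

/-!
The functional `D(t) = ½ ∑_{γ,δ} ⟪v_δ - v_γ, y_δ - y_γ⟫ / ‖y_δ - y_γ‖` (`separationRate`) is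
nondecreasing during free flight, each term being the derivative of the convex function
`t ↦ ‖y_δ(t) - y_γ(t)‖`, and at a collision it jumps up by at least the total velocity jump
`∑ |v' - v|`. Hence the jumps in any time slab `(s, u]` add up to at most `D(u) - D(s)`.
Finally `D` is Galilean invariant, so `|D| ≤ N ∑ ‖v_γ - w‖ ≤ N² 𝐯` by Cauchy–Schwarz and the
conservation of `∑ ‖v_γ - w‖²`; thus `c_n = 2` works in every dimension.
-/

section SeparationRate

variable {ι E : Type*} [Fintype ι] [NormedAddCommGroup E] [InnerProductSpace ℝ E]

/-- Away from the zeros of `x + s • q`, the two sides are the derivatives of the convex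
function `s ↦ ‖x + s • q‖` at `0` and at `c`. -/
lemma inner_div_norm_le_inner_add_smul_div_norm (q x : E) {c : ℝ} (hc : 0 ≤ c) :
    ⟪q, x⟫ / ‖x‖ ≤ ⟪q, x + c • q⟫ / ‖x + c • q‖ := by
  have hinner : ⟪q, x + c • q⟫ = ⟪q, x⟫ + c * ‖q‖ ^ 2 := by
    rw [inner_add_right, real_inner_smul_right, real_inner_self_eq_norm_sq]
  rcases eq_or_ne x 0 with rfl | hx
  · rw [hinner, inner_zero_right, norm_zero, div_zero, zero_add]
    positivity
  rcases eq_or_ne (x + c • q) 0 with hz | hz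
  · have hx' : x = -(c • q) := eq_neg_of_add_eq_zero_left hz
    rw [hz, inner_zero_right, zero_div, hx', inner_neg_right, real_inner_smul_right,
      real_inner_self_eq_norm_sq, neg_div]
    simp only [Left.neg_nonpos_iff]
    positivity
  have hxn : 0 < ‖x‖ := norm_pos_iff.mpr hx
  have hzn : 0 < ‖x + c • q‖ := norm_pos_iff.mpr hz
  have hcq : ‖c • q‖ = c * ‖q‖ := by rw [norm_smul, Real.norm_of_nonneg hc]
  have h1 : ‖x + c • q‖ ≤ ‖x‖ + c * ‖q‖ := hcq ▸ norm_add_le _ _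
  have h2 : ‖x‖ ≤ ‖x + c • q‖ + c * ‖q‖ := by
    simpa [hcq] using norm_sub_le (x + c • q) (c • q)
  have hA := abs_le.mp (abs_real_inner_le_norm q x)
  rw [div_le_div_iff₀ hxn hzn, hinner]
  rcases le_or_gt 0 ⟪q, x⟫ with h | h
  · nlinarith [mul_nonneg hc (norm_nonneg q), mul_nonneg h (mul_nonneg hc (norm_nonneg q))]
  · nlinarith [mul_nonneg hc (norm_nonneg q)]

lemma abs_inner_div_norm_le (q w : E) : |⟪q, w⟫ / ‖w‖| ≤ ‖q‖ := by
  rw [abs_div, abs_norm]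
  exact div_le_of_le_mul₀ (norm_nonneg _) (norm_nonneg _) (abs_real_inner_le_norm q w)

def separationRate (y v : ι → E) : ℝ :=
  2⁻¹ * ∑ i, ∑ j, ⟪v j - v i, y j - y i⟫ / ‖y j - y i‖

lemma separationRate_eq_sum (y v : ι → E) :
    separationRate y v = ∑ i, ∑ j, ⟪v j, y j - y i⟫ / ‖y j - y i‖ := by
  have hswap : ∑ i, ∑ j, ⟪v i, y j - y i⟫ / ‖y j - y i‖
      = -∑ i, ∑ j, ⟪v j, y j - y i⟫ / ‖y j - y i‖ := by
    rw [Finset.sum_comm, ← Finset.sum_neg_distrib]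
    refine Fintype.sum_congr _ _ fun i => ?_
    rw [← Finset.sum_neg_distrib]
    refine Fintype.sum_congr _ _ fun j => ?_
    rw [← neg_sub (y j), inner_neg_right, norm_neg, neg_div]
  simp only [separationRate, inner_sub_left, sub_div, Finset.sum_sub_distrib, hswap]
  ring

lemma separationRate_sub (y v v' : ι → E) :
    separationRate y v' - separationRate y v = separationRate y (fun i => v' i - v i) := by
  simp only [separationRate_eq_sum, ← Finset.sum_sub_distrib, ← sub_div, ← inner_sub_left]

lemma separationRate_sub_const (y v : ι → E) (w : E) :
    separationRate y (fun i => v i - w) = separationRate y v := by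
  simp only [separationRate, sub_sub_sub_cancel_right]

lemma abs_separationRate_le (y v : ι → E) :
    |separationRate y v| ≤ Fintype.card ι * ∑ i, ‖v i‖ :=
  calc |separationRate y v| ≤ ∑ _i : ι, ∑ j, ‖v j‖ := by
        rw [separationRate_eq_sum]
        refine (Finset.abs_sum_le_sum_abs _ _).trans (Finset.sum_le_sum fun i _ => ?_)
        refine (Finset.abs_sum_le_sum_abs _ _).trans (Finset.sum_le_sum fun j _ => ?_)
        exact abs_inner_div_norm_le _ _
    _ = Fintype.card ι * ∑ i, ‖v i‖ := by
        rw [Finset.sum_const, Finset.card_univ, nsmul_eq_mul]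

lemma separationRate_le_add_smul (y v : ι → E) {c : ℝ} (hc : 0 ≤ c) :
    separationRate y v ≤ separationRate (fun i => y i + c • v i) v := by
  unfold separationRate
  refine mul_le_mul_of_nonneg_left (Finset.sum_le_sum fun i _ => Finset.sum_le_sum fun j _ => ?_)
    (by norm_num)
  have hy : y j + c • v j - (y i + c • v i) = y j - y i + c • (v j - v i) := by
    rw [smul_sub]; abel
  rw [hy]
  exact inner_div_norm_le_inner_add_smul_div_norm _ _ hc

/-- The pair `{a, b}` contributes exactly `2 * ‖d a‖`; every third particle `i` contributes a
nonnegative amount by `inner_div_norm_le_inner_add_smul_div_norm`, since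
`y b - y i = (y a - y i) + (y b - y a)`. -/
lemma two_mul_norm_le_separationRate (y d : ι → E) {a b : ι} (hab : a ≠ b) {c : ℝ}
    (hc : c ≤ 0) (ha : d a = c • (y b - y a)) (hb : d b = -d a)
    (hd : ∀ i, i ≠ a → i ≠ b → d i = 0) :
    2 * ‖d a‖ ≤ separationRate y d := by
  classical
  set g : ι → ℝ := fun i => ⟪d a, y a - y i⟫ / ‖y a - y i‖ - ⟪d a, y b - y i⟫ / ‖y b - y i‖
  have hsum : separationRate y d = ∑ i, g i := by
    rw [separationRate_eq_sum]
    refine Fintype.sum_congr _ _ fun i => ?_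
    rw [Fintype.sum_eq_add a b hab fun j hj => by rw [hd j hj.1 hj.2, inner_zero_left,
      zero_div], hb, inner_neg_left, neg_div, ← sub_eq_add_neg]
  have hg : ∀ i, 0 ≤ g i := fun i => by
    have hyb : y b - y i = (y a - y i) + (1 : ℝ) • (y b - y a) := by rw [one_smul]; abel
    have := inner_div_norm_le_inner_add_smul_div_norm (y b - y a) (y a - y i) zero_le_one
    simp only [g, ha, real_inner_smul_left, mul_div_assoc, ← mul_sub, hyb]
    exact mul_nonneg_of_nonpos_of_nonpos hc (sub_nonpos.mpr this)
  have hda : ⟪d a, y b - y a⟫ / ‖y b - y a‖ = -‖d a‖ := by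
    rw [ha, real_inner_smul_left, real_inner_self_eq_norm_sq, norm_smul, Real.norm_of_nonpos hc,
      sq, mul_div_assoc, mul_self_div_self, neg_mul, neg_neg]
  have hga : g a = ‖d a‖ := by
    simp only [g, sub_self, inner_zero_right, norm_zero, div_zero, zero_sub, hda, neg_neg]
  have hgb : g b = ‖d a‖ := by
    simp only [g, sub_self, inner_zero_right, norm_zero, div_zero, sub_zero, ← neg_sub (y b),
      inner_neg_right, norm_neg, neg_div, hda, neg_neg]
  calc 2 * ‖d a‖ = ∑ i ∈ {a, b}, g i := by rw [Finset.sum_pair hab, hga, hgb]; ring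
    _ ≤ ∑ i, g i := Finset.sum_le_sum_of_subset_of_nonneg (Finset.subset_univ _)
        fun i _ _ => hg i
    _ = separationRate y d := hsum.symm

lemma sum_norm_sub_sq_eq_of_sum_eq {v v' : ι → E} (hsum : ∑ i, v' i = ∑ i, v i)
    (hsq : ∑ i, ‖v' i‖ ^ 2 = ∑ i, ‖v i‖ ^ 2) (w : E) :
    ∑ i, ‖v' i - w‖ ^ 2 = ∑ i, ‖v i - w‖ ^ 2 := by
  simp only [norm_sub_sq_real, Finset.sum_add_distrib, Finset.sum_sub_distrib, ← Finset.mul_sum,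
    ← sum_inner, hsum, hsq]

end SeparationRate

section KinkInduction

variable {K : Set ℝ} {f g j : ℝ → ℝ}

theorem add_sum_le_of_le_between_kinks
    (hflow : ∀ s T, s < T → (∀ t ∈ Set.Ioo s T, t ∉ K) → f s ≤ g T)
    (hjump : ∀ t, g t + j t ≤ f t) (hj : ∀ t ∉ K, j t = 0)
    {s u : ℝ} (hsu : s ≤ u) {S : Finset ℝ} (hS : ↑S = K ∩ Set.Ioc s u) :
    f s + ∑ t ∈ S, j t ≤ f u := by
  classical
  induction S using Finset.induction_on_min generalizing s with
  | empty =>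
    rw [Finset.sum_empty, add_zero]
    rcases hsu.eq_or_lt with rfl | hsu
    · exact le_rfl
    have hK : ∀ t ∈ Set.Ioc s u, t ∉ K := fun t ht htK => by
      simpa using hS.symm.subset ⟨htK, ht⟩
    have := hjump u
    rw [hj u (hK u ⟨hsu, le_rfl⟩), add_zero] at this
    exact (hflow s u hsu fun t ht => hK t (Set.Ioo_subset_Ioc_self ht)).trans this
  | insert m S hmS ih =>
    have hm : m ∈ K ∩ Set.Ioc s u := hS ▸ Finset.mem_insert_self m S
    have hS' : ↑S = K ∩ Set.Ioc m u := by
      ext t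
      constructor
      · intro ht
        have := hS.subset (Finset.mem_insert_of_mem ht)
        exact ⟨this.1, hmS t ht, this.2.2⟩
      · rintro ⟨htK, hmt, htu⟩
        have := hS.symm.subset ⟨htK, hm.2.1.trans hmt, htu⟩
        exact (Finset.mem_insert.mp this).resolve_left hmt.ne'
    have hK : ∀ t ∈ Set.Ioo s m, t ∉ K := fun t ht htK => by
      have := hS.symm.subset ⟨htK, ht.1, ht.2.le.trans hm.2.2⟩
      rcases Finset.mem_insert.mp this with h | h
      · exact ht.2.ne h
      · exact (hmS t h).not_gt ht.2
    rw [Finset.sum_insert fun h => (hmS m h).false]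
    linarith [hflow s m hm.2.1 hK, hjump m, ih hm.2.2 hS']

theorem eq_of_eq_between_kinks (hK : ∀ s u, (K ∩ Set.Ioc s u).Finite)
    (hflow : ∀ s T, s < T → (∀ t ∈ Set.Ioo s T, t ∉ K) → f s = g T)
    (hjump : ∀ t, g t = f t) (s u : ℝ) : f s = f u := by
  wlog hsu : s ≤ u generalizing s u
  · exact (this u s (le_of_not_ge hsu)).symm
  have hS := (hK s u).coe_toFinset
  have hle := add_sum_le_of_le_between_kinks (j := 0) (fun s T hsT h => (hflow s T hsT h).le)
    (fun t => by simp [hjump t]) (fun _ _ => rfl) hsu hS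
  have hge := add_sum_le_of_le_between_kinks (f := fun t => -f t) (g := fun t => -g t) (j := 0)
    (fun s T hsT h => neg_le_neg (hflow s T hsT h).ge)
    (fun t => by simp [hjump t]) (fun _ _ => rfl) hsu hS
  simp only [Pi.zero_apply, Finset.sum_const_zero, add_zero, neg_le_neg_iff] at hle hge
  exact le_antisymm hle hge

end KinkInduction

namespace HardSphereFlow

variable {n N : ℕ} (F : HardSphereFlow n N)

def collisionTimes : Set ℝ := ⋃ α, F.KinkTimes α

lemma notMem_collisionTimes {t : ℝ} : t ∉ F.collisionTimes ↔ ∀ α, F.vIn α t = F.v α t := by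
  simp [collisionTimes, KinkTimes]

lemma collisionTimes_inter_Ioc_finite (s u : ℝ) : (F.collisionTimes ∩ Set.Ioc s u).Finite := by
  refine (Set.finite_iUnion fun α => F.kinks_finite α s u).subset ?_
  rintro t ⟨ht, htsu⟩
  obtain ⟨α, hα⟩ := Set.mem_iUnion.mp ht
  exact Set.mem_iUnion.mpr ⟨α, Set.Ioc_subset_Icc_self htsu, hα⟩

lemma vIn_eq_and_y_eq_of_no_collisions {s T : ℝ} (hsT : s < T)
    (h : ∀ t ∈ Set.Ioo s T, t ∉ F.collisionTimes) (α : Fin N) :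
    F.vIn α T = F.v α s ∧ F.y α T = F.y α s + (T - s) • F.v α s := by
  have haffine : ∀ᶠ r in nhdsWithin T (Set.Iio T),
      F.v α r = F.v α s ∧ F.y α r = F.y α s + (r - s) • F.v α s := by
    filter_upwards [Ioo_mem_nhdsLT hsT] with r hr
    exact F.piecewise_affine α s r hr.1.le fun t hst htr =>
      F.notMem_collisionTimes.mp (h t ⟨hst, htr.trans_lt hr.2⟩) α
  constructor
  · obtain ⟨r, hr, hvr⟩ := ((F.vIn_left_limit α T).and haffine).exists
    rw [← hr, hvr.1]
  · have hlim : Filter.Tendsto (fun r => F.y α s + (r - s) • F.v α s)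
        (nhdsWithin T (Set.Iio T)) (nhds (F.y α s + (T - s) • F.v α s)) :=
      (Continuous.tendsto (by fun_prop) T).mono_left nhdsWithin_le_nhds
    refine tendsto_nhds_unique ?_ hlim
    exact (((F.y_continuous α).tendsto T).mono_left nhdsWithin_le_nhds).congr'
      (haffine.mono fun r hr => hr.2)

lemma separationRate_le_separationRate_vIn_of_no_collisions {s T : ℝ} (hsT : s < T)
    (h : ∀ t ∈ Set.Ioo s T, t ∉ F.collisionTimes) :
    separationRate (F.y · s) (F.v · s) ≤ separationRate (F.y · T) (F.vIn · T) := by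
  simp only [(F.vIn_eq_and_y_eq_of_no_collisions hsT h _).1,
    (F.vIn_eq_and_y_eq_of_no_collisions hsT h _).2]
  exact separationRate_le_add_smul _ _ (sub_nonneg.mpr hsT.le)

lemma exists_collision_partner {α : Fin N} {t : ℝ} (hα : F.vIn α t ≠ F.v α t) :
    ∃ β, β ≠ α ∧ (∀ γ, γ ≠ α → γ ≠ β → F.vIn γ t = F.v γ t) ∧
      (∃ c : ℝ, c ≤ 0 ∧ F.v α t - F.vIn α t = c • (F.y β t - F.y α t)) ∧
      F.v β t - F.vIn β t = -(F.v α t - F.vIn α t) ∧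
      ‖F.v α t‖ ^ 2 + ‖F.v β t‖ ^ 2 = ‖F.vIn α t‖ ^ 2 + ‖F.vIn β t‖ ^ 2 := by
  obtain ⟨β, ⟨hβα, hdist⟩, huniq⟩ := F.partner_unique α t hα
  obtain ⟨-, hmom, hen, hrefl, ⟨c, hc⟩, happ, hsep⟩ := F.collision_rules α β t hα hβα hdist
  refine ⟨β, hβα, fun γ hγα hγβ => ?_, ⟨c, ?_, hc⟩, by rw [hrefl, neg_sub], hen⟩
  · by_contra hγ
    exact hγβ (huniq γ ⟨hγα, F.one_collision_at_a_time t α γ hα hγ hγα⟩)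
  · -- the relative normal velocity changes by `-2c‖y β - y α‖²`, from negative to positive
    have hv : F.v β t - F.v α t = F.vIn β t - F.vIn α t - (2 * c) • (F.y β t - F.y α t) := by
      rw [mul_smul, two_smul, ← hc, ← sub_sub_cancel (F.vIn β t) (F.v β t), ← hrefl]
      abel
    rw [hv, inner_sub_left, real_inner_smul_left, real_inner_self_eq_norm_sq] at hsep
    nlinarith [sq_nonneg ‖F.y β t - F.y α t‖]

lemma sum_norm_v_sub_sq_eq_sum_norm_vIn_sub_sq (t : ℝ) (w : EuclideanSpace ℝ (Fin n)) :
    ∑ γ, ‖F.v γ t - w‖ ^ 2 = ∑ γ, ‖F.vIn γ t - w‖ ^ 2 := by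
  by_cases ht : t ∈ F.collisionTimes
  · obtain ⟨α, hα⟩ := Set.mem_iUnion.mp ht
    obtain ⟨β, hβα, hother, -, hβ, hen⟩ := F.exists_collision_partner hα
    have hsum : ∑ γ, F.v γ t = ∑ γ, F.vIn γ t := by
      rw [← sub_eq_zero, ← Finset.sum_sub_distrib, Fintype.sum_eq_add α β hβα.symm
        fun γ hγ => by rw [hother γ hγ.1 hγ.2, sub_self], hβ, add_neg_cancel]
    have hsq : ∑ γ, ‖F.v γ t‖ ^ 2 = ∑ γ, ‖F.vIn γ t‖ ^ 2 := by
      rw [← sub_eq_zero, ← Finset.sum_sub_distrib, Fintype.sum_eq_add α β hβα.symm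
        fun γ hγ => by rw [hother γ hγ.1 hγ.2, sub_self]]
      linarith
    exact sum_norm_sub_sq_eq_of_sum_eq hsum hsq w
  · simp [(F.notMem_collisionTimes.mp ht _)]

lemma separationRate_vIn_add_le (t : ℝ) :
    separationRate (F.y · t) (F.vIn · t) + ∑ γ, ‖F.v γ t - F.vIn γ t‖
      ≤ separationRate (F.y · t) (F.v · t) := by
  by_cases ht : t ∈ F.collisionTimes
  · obtain ⟨α, hα⟩ := Set.mem_iUnion.mp ht
    obtain ⟨β, hβα, hother, ⟨c, hc, hcα⟩, hβ, -⟩ := F.exists_collision_partner hα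
    have hd : ∀ γ, γ ≠ α → γ ≠ β → F.v γ t - F.vIn γ t = 0 := fun γ hγα hγβ => by
      rw [hother γ hγα hγβ, sub_self]
    have hjump := two_mul_norm_le_separationRate (F.y · t) (fun γ => F.v γ t - F.vIn γ t)
      hβα.symm hc hcα hβ hd
    rw [Fintype.sum_eq_add α β hβα.symm fun γ hγ => by rw [hd γ hγ.1 hγ.2, norm_zero], hβ,
      norm_neg]
    linarith [separationRate_sub (F.y · t) (F.vIn · t) (F.v · t)]
  · simp [(F.notMem_collisionTimes.mp ht _)]

lemma sum_norm_v_zero_sub_meanVelocity_sq :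
    ∑ γ, ‖F.v γ 0 - F.meanVelocity‖ ^ 2 = N * F.vdev ^ 2 := by
  rcases Nat.eq_zero_or_pos N with rfl | hN
  · simp
  have hN' : (N : ℝ) ≠ 0 := by positivity
  have hsum : ∑ γ, F.v γ 0 = (N : ℝ) • F.meanVelocity := by
    rw [meanVelocity, smul_smul, mul_inv_cancel₀ hN', one_smul]
  have hexpand : ∑ γ, ‖F.v γ 0 - F.meanVelocity‖ ^ 2
      = ∑ γ, ‖F.v γ 0‖ ^ 2 - N * ‖F.meanVelocity‖ ^ 2 := by
    simp only [norm_sub_sq_real, Finset.sum_add_distrib, Finset.sum_sub_distrib,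
      ← Finset.mul_sum, ← sum_inner, hsum, real_inner_smul_left, real_inner_self_eq_norm_sq,
      Finset.sum_const, Finset.card_univ, Fintype.card_fin, nsmul_eq_mul]
    ring
  have hvbar : F.vbar ^ 2 = (∑ γ, ‖F.v γ 0‖ ^ 2) / N := by
    rw [vbar, Real.sq_sqrt (by unfold totalEnergy; positivity), totalEnergy]
    ring
  have hnonneg : 0 ≤ F.vbar ^ 2 - ‖F.meanVelocity‖ ^ 2 := by
    rw [hvbar, sub_nonneg, le_div_iff₀ (by positivity), mul_comm, ← sub_nonneg, ← hexpand]
    positivity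
  rw [hexpand, vdev, Real.sq_sqrt hnonneg, hvbar]
  field_simp

lemma sum_norm_v_sub_meanVelocity_sq (t : ℝ) :
    ∑ γ, ‖F.v γ t - F.meanVelocity‖ ^ 2 = N * F.vdev ^ 2 := by
  rw [← F.sum_norm_v_zero_sub_meanVelocity_sq]
  refine eq_of_eq_between_kinks (K := F.collisionTimes)
    (g := fun t => ∑ γ, ‖F.vIn γ t - F.meanVelocity‖ ^ 2) F.collisionTimes_inter_Ioc_finite
    (fun s T hsT h => ?_) (fun t => (F.sum_norm_v_sub_sq_eq_sum_norm_vIn_sub_sq t _).symm) t 0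
  simp only [(F.vIn_eq_and_y_eq_of_no_collisions hsT h _).1]

lemma abs_separationRate_le_sq_mul_vdev (t : ℝ) :
    |separationRate (F.y · t) (F.v · t)| ≤ N ^ 2 * F.vdev := by
  have hCS : (∑ γ, ‖F.v γ t - F.meanVelocity‖) ^ 2 ≤ (N * F.vdev) ^ 2 := by
    have := sq_sum_le_card_mul_sum_sq (s := Finset.univ) (f := fun γ => ‖F.v γ t - F.meanVelocity‖)
    rw [F.sum_norm_v_sub_meanVelocity_sq, Finset.card_univ, Fintype.card_fin] at this
    linarith
  have hsum := le_of_sq_le_sq hCS (by unfold vdev; positivity)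
  calc |separationRate (F.y · t) (F.v · t)|
      = |separationRate (F.y · t) (fun γ => F.v γ t - F.meanVelocity)| := by
        rw [separationRate_sub_const]
    _ ≤ N * ∑ γ, ‖F.v γ t - F.meanVelocity‖ := by
        simpa using abs_separationRate_le (F.y · t) (fun γ => F.v γ t - F.meanVelocity)
    _ ≤ N ^ 2 * F.vdev := by nlinarith [Nat.cast_nonneg (α := ℝ) N]

lemma sum_collisionTimes_le {s u : ℝ} (hsu : s ≤ u) :
    ∑ t ∈ (F.collisionTimes_inter_Ioc_finite s u).toFinset, ∑ γ, ‖F.v γ t - F.vIn γ t‖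
      ≤ 2 * N ^ 2 * F.vdev := by
  have hmono := add_sum_le_of_le_between_kinks
    (fun s T => F.separationRate_le_separationRate_vIn_of_no_collisions (s := s) (T := T))
    F.separationRate_vIn_add_le (fun t ht => by simp [F.notMem_collisionTimes.mp ht]) hsu
    (F.collisionTimes_inter_Ioc_finite s u).coe_toFinset
  linarith [abs_le.mp (F.abs_separationRate_le_sq_mul_vdev s),
    abs_le.mp (F.abs_separationRate_le_sq_mul_vdev u)]

lemma sum_kinks_le (S : Finset F.Kinks) :
    ∑ k ∈ S, ‖F.v k.1.1 k.1.2 - F.vIn k.1.1 k.1.2‖ ≤ 2 * N ^ 2 * F.vdev := by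
  classical
  obtain ⟨s, hs⟩ := (S.image fun k => k.1.2).bddBelow
  obtain ⟨u, hu⟩ := (insert (s - 1) (S.image fun k => k.1.2)).bddAbove
  set T := (F.collisionTimes_inter_Ioc_finite (s - 1) u).toFinset
  have hST : S.map (Function.Embedding.subtype _) ⊆ Finset.univ ×ˢ T := fun p hp => by
    obtain ⟨k, hk, rfl⟩ := Finset.mem_map.mp hp
    change k.1 ∈ _
    have hkS := Finset.mem_image_of_mem (fun k : F.Kinks => k.1.2) hk
    refine Finset.mem_product.mpr ⟨Finset.mem_univ _, ?_⟩
    refine (Set.Finite.mem_toFinset _).mpr ⟨Set.mem_iUnion.mpr ⟨k.1.1, k.2⟩, ?_, ?_⟩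
    · linarith [hs hkS]
    · exact hu (Finset.mem_insert_of_mem hkS)
  calc ∑ k ∈ S, ‖F.v k.1.1 k.1.2 - F.vIn k.1.1 k.1.2‖
      = ∑ p ∈ S.map (Function.Embedding.subtype _), ‖F.v p.1 p.2 - F.vIn p.1 p.2‖ := by
        rw [Finset.sum_map]; rfl
    _ ≤ ∑ p ∈ Finset.univ ×ˢ T, ‖F.v p.1 p.2 - F.vIn p.1 p.2‖ :=
        Finset.sum_le_sum_of_subset_of_nonneg hST fun _ _ _ => norm_nonneg _
    _ = ∑ t ∈ T, ∑ γ, ‖F.v γ t - F.vIn γ t‖ := Finset.sum_product_right _ _ _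
    _ ≤ 2 * N ^ 2 * F.vdev :=
        F.sum_collisionTimes_le (by linarith [hu (Finset.mem_insert_self _ _)])

end HardSphereFlow

theorem hard_spheres_galilean_invariant_estimate_general (n : ℕ) :
    ∃ c : ℝ, ∀ (N : ℕ) (F : HardSphereFlow n N),
      Summable (fun k : F.Kinks => ‖F.v k.1.1 k.1.2 - F.vIn k.1.1 k.1.2‖) ∧
      ∑' k : F.Kinks, ‖F.v k.1.1 k.1.2 - F.vIn k.1.1 k.1.2‖
        ≤ c * (N : ℝ) ^ 2 * F.vdev := by
  refine ⟨2, fun N F => ?_⟩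
  have hsummable := summable_of_sum_le (fun k => norm_nonneg _) F.sum_kinks_le
  exact ⟨hsummable, hsummable.tsum_le_of_sum_le F.sum_kinks_le⟩

/-- **Galilean-invariant collision estimate** (Serre, inequality (1.7)).
There is a finite constant `c_n`, depending only on the space dimension `n`, such that
for every hard-sphere flow of `N` particles in `ℝⁿ`, the family `|v' - v|`, indexed by
all the kinks of the flow, is summable with `∑_{kinks} |v' - v| ≤ c_n N² 𝐯`,
where `𝐯` is the standard deviation of the velocity distribution. -/
theorem hard_spheres_galilean_invariant_estimate (n : ℕ) (hn : 1 ≤ n) :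
    ∃ c : ℝ, ∀ (N : ℕ) (F : HardSphereFlow n N),
      Summable (fun k : F.Kinks => ‖F.v k.1.1 k.1.2 - F.vIn k.1.1 k.1.2‖) ∧
      ∑' k : F.Kinks, ‖F.v k.1.1 k.1.2 - F.vIn k.1.1 k.1.2‖
        ≤ c * (N : ℝ) ^ 2 * F.vdev :=
  hard_spheres_galilean_invariant_estimate_general n
end
end

section
/- For every p ≥ 1 there exists a hard-sphere flow of N = 2p particles in ℝ¹ (n = 1, for some radius a > 0) with mean velocity w = 0 and standard deviation 𝐯 = 1 such that ∑_{α=1}^N ℓ(H_α) = N²; namely, p particles initially moving to the right with velocity +1 placed to the left of p particles initially moving to the left with velocity −1. Consequently the estimate ∑_α ℓ(H_α) ≤ c_n N² 𝐯 is sharp up to the value of the constant. -/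
open scoped BigOperators RealInnerProductSpace
open Filter

noncomputable section

namespace HardSphereFlow

variable {n N : ℕ} (F : HardSphereFlow n N)

/-- The length `ℓ(H_α)` of the hodograph of particle `α`: the sum of `|v' - v|`
over all kinks of particle `α`. -/
def hodographLength (α : Fin N) : ℝ :=
  ∑' t : F.KinkTimes α, ‖F.v α t - F.vIn α t‖

end HardSphereFlow

/-!
On the line, hard spheres behave like point particles that pass through each other. Let free
points move along the lines `c i + m i * t`; the `α`-th smallest of their positions, pushed
`2 a α` to the right, is the trajectory of the `α`-th sphere of radius `a`. Two spheres touch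
exactly when two lines cross, and there they exchange the slopes of the crossing lines: the
velocity of a sphere just after (before) `t` is read off by sorting the lines at time `t` with
ties broken by increasing (decreasing) slope. If the points start apart and no two crossings
happen at the same time this is a hard-sphere flow, and a crossing of lines with slopes `m i > m j` adds `2 (m i - m j)` to
the total hodograph length.

Take `p` lines of slope `1` and `p` lines of slope `-1`, with intercepts `2 ^ k`. Every right
mover `i` meets every left mover `j` once, at time `(2 ^ (p + j) - 2 ^ i) / 2`; these `p ^ 2`
times are distinct by uniqueness of binary expansions, so the total hodograph length is
`4 p ^ 2 = N ^ 2`.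
-/

open Filter Topology Set

namespace FreeLines

variable {N : ℕ} (c m : Fin N → ℝ)

def traj (i : Fin N) (t : ℝ) : ℝ := c i + m i * t

def orderStat (α : Fin N) (t : ℝ) : ℝ := traj c m (Tuple.sort (fun i => traj c m i t) α) t

def rightOrder (t : ℝ) : Equiv.Perm (Fin N) := Tuple.sort fun i => toLex (traj c m i t, m i)

def leftOrder (t : ℝ) : Equiv.Perm (Fin N) := Tuple.sort fun i => toLex (traj c m i t, -m i)

def rightSlope (α : Fin N) (t : ℝ) : ℝ := m (rightOrder c m t α)

def leftSlope (α : Fin N) (t : ℝ) : ℝ := m (leftOrder c m t α)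

def SimpleCrossings : Prop :=
  ∀ t i j k l, i ≠ j → k ≠ l → traj c m i t = traj c m j t → traj c m k t = traj c m l t →
    s(i, j) = s(k, l)

variable {c m}

lemma hasDerivAt_traj (i : Fin N) (t : ℝ) : HasDerivAt (traj c m i) (m i) t :=
  (((hasDerivAt_id' t).const_mul (m i)).const_add (c i)).congr_deriv (mul_one _)

lemma continuous_traj (i : Fin N) : Continuous (traj c m i) :=
  continuous_const.add (continuous_const.mul continuous_id)

lemma monotone_orderStat (t : ℝ) : Monotone fun α => orderStat c m α t :=
  Tuple.monotone_sort fun i => traj c m i t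

lemma orderStat_eq_of_monotone {t : ℝ} {σ : Equiv.Perm (Fin N)}
    (h : Monotone fun α => traj c m (σ α) t) (α : Fin N) :
    orderStat c m α t = traj c m (σ α) t :=
  congrFun (Tuple.unique_monotone (f := fun i => traj c m i t) (Tuple.monotone_sort _) h) α

lemma eventually_orderStat_eq {l : Filter ℝ} {σ : Equiv.Perm (Fin N)}
    (h : ∀ α β, α ≤ β → ∀ᶠ u in l, traj c m (σ α) u ≤ traj c m (σ β) u) :
    ∀ᶠ u in l, ∀ α, orderStat c m α u = traj c m (σ α) u := by
  have hmono : ∀ᶠ u in l, ∀ α β, α ≤ β → traj c m (σ α) u ≤ traj c m (σ β) u :=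
    eventually_all.2 fun α => eventually_all.2 fun β => eventually_imp_distrib_left.2 (h α β)
  filter_upwards [hmono] with u hu using orderStat_eq_of_monotone fun α β => hu α β

lemma eventually_traj_le_of_lt {t : ℝ} {i j : Fin N} (h : traj c m i t < traj c m j t) :
    ∀ᶠ u in 𝓝 t, traj c m i u ≤ traj c m j u :=
  ((continuous_traj i).continuousAt.eventually_lt (continuous_traj j).continuousAt h).mono
    fun _ => le_of_lt

lemma eventually_traj_le_nhdsGE {t : ℝ} {i j : Fin N}
    (h : toLex (traj c m i t, m i) ≤ toLex (traj c m j t, m j)) :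
    ∀ᶠ u in 𝓝[≥] t, traj c m i u ≤ traj c m j u := by
  rcases Prod.Lex.le_iff.1 h with hlt | ⟨heq, hm⟩
  · exact nhdsWithin_le_nhds (eventually_traj_le_of_lt hlt)
  · filter_upwards [self_mem_nhdsWithin] with u (hu : t ≤ u)
    simp only [traj, ofLex_toLex] at heq hm ⊢
    nlinarith

lemma eventually_traj_le_nhdsLE {t : ℝ} {i j : Fin N}
    (h : toLex (traj c m i t, -m i) ≤ toLex (traj c m j t, -m j)) :
    ∀ᶠ u in 𝓝[≤] t, traj c m i u ≤ traj c m j u := by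
  rcases Prod.Lex.le_iff.1 h with hlt | ⟨heq, hm⟩
  · exact nhdsWithin_le_nhds (eventually_traj_le_of_lt hlt)
  · filter_upwards [self_mem_nhdsWithin] with u (hu : u ≤ t)
    simp only [traj, ofLex_toLex] at heq hm ⊢
    nlinarith

lemma eventually_orderStat_eq_rightOrder (t : ℝ) :
    ∀ᶠ u in 𝓝[≥] t, ∀ α, orderStat c m α u = traj c m (rightOrder c m t α) u :=
  eventually_orderStat_eq fun _ _ hαβ => eventually_traj_le_nhdsGE
    (Tuple.monotone_sort (fun i => toLex (traj c m i t, m i)) hαβ)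

lemma eventually_orderStat_eq_leftOrder (t : ℝ) :
    ∀ᶠ u in 𝓝[≤] t, ∀ α, orderStat c m α u = traj c m (leftOrder c m t α) u :=
  eventually_orderStat_eq fun _ _ hαβ => eventually_traj_le_nhdsLE
    (Tuple.monotone_sort (fun i => toLex (traj c m i t, -m i)) hαβ)

lemma orderStat_eq_traj_rightOrder (α : Fin N) (t : ℝ) :
    orderStat c m α t = traj c m (rightOrder c m t α) t :=
  (eventually_orderStat_eq_rightOrder t).self_of_nhdsWithin (Set.mem_Ici.2 le_rfl) α

lemma orderStat_eq_traj_leftOrder (α : Fin N) (t : ℝ) :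
    orderStat c m α t = traj c m (leftOrder c m t α) t :=
  (eventually_orderStat_eq_leftOrder t).self_of_nhdsWithin (Set.mem_Iic.2 le_rfl) α

lemma hasDerivWithinAt_orderStat_Ici (α : Fin N) (t : ℝ) :
    HasDerivWithinAt (orderStat c m α) (rightSlope c m α t) (Ici t) t :=
  (hasDerivAt_traj _ t).hasDerivWithinAt.congr_of_eventuallyEq
    ((eventually_orderStat_eq_rightOrder t).mono fun _ hu => hu α)
    (orderStat_eq_traj_rightOrder α t)

lemma hasDerivWithinAt_orderStat_Iic (α : Fin N) (t : ℝ) :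
    HasDerivWithinAt (orderStat c m α) (leftSlope c m α t) (Iic t) t :=
  (hasDerivAt_traj _ t).hasDerivWithinAt.congr_of_eventuallyEq
    ((eventually_orderStat_eq_leftOrder t).mono fun _ hu => hu α)
    (orderStat_eq_traj_leftOrder α t)

lemma continuous_orderStat (α : Fin N) : Continuous (orderStat c m α) :=
  continuous_iff_continuousAt.2 fun t => continuousAt_iff_continuous_left_right.2
    ⟨(hasDerivWithinAt_orderStat_Iic α t).continuousWithinAt,
      (hasDerivWithinAt_orderStat_Ici α t).continuousWithinAt⟩

lemma rightSlope_eq_of_eqOn {α : Fin N} {i : Fin N} {a b : ℝ}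
    (h : EqOn (orderStat c m α) (traj c m i) (Ioo a b)) {u : ℝ} (hu : u ∈ Ioo a b) :
    rightSlope c m α u = m i :=
  (uniqueDiffWithinAt_Ici u).eq_deriv _ (hasDerivWithinAt_orderStat_Ici α u)
    ((hasDerivAt_traj i u).hasDerivWithinAt.congr_of_eventuallyEq
      (nhdsWithin_le_nhds (eventually_of_mem (Ioo_mem_nhds hu.1 hu.2) h)) (h hu))

lemma eventually_rightSlope_eq_leftSlope (α : Fin N) (t : ℝ) :
    ∀ᶠ u in 𝓝[<] t, rightSlope c m α u = leftSlope c m α t := by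
  obtain ⟨a, ha, hsub⟩ := mem_nhdsLE_iff_exists_Ioc_subset.1 (eventually_orderStat_eq_leftOrder t)
  filter_upwards [Ioo_mem_nhdsLT ha] with u hu
  exact rightSlope_eq_of_eqOn (fun u' hu' => hsub (Ioo_subset_Ioc_self hu') α) hu

lemma eventually_rightSlope_eq (α : Fin N) (t : ℝ) :
    ∀ᶠ u in 𝓝[≥] t, rightSlope c m α u = rightSlope c m α t := by
  obtain ⟨b, hb, hsub⟩ := mem_nhdsGE_iff_exists_Ico_subset.1 (eventually_orderStat_eq_rightOrder t)
  filter_upwards [Ico_mem_nhdsGE hb] with u hu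
  rcases hu.1.eq_or_lt with rfl | htu
  · rfl
  · exact rightSlope_eq_of_eqOn (fun u' hu' => hsub (Ioo_subset_Ico_self hu') α) ⟨htu, hu.2⟩

lemma continuousOn_rightSlope {α : Fin N} {s t : ℝ}
    (h : ∀ u ∈ Ioc s t, leftSlope c m α u = rightSlope c m α u) :
    ContinuousOn (rightSlope c m α) (Icc s t) := by
  intro u hu
  refine continuousWithinAt_const.congr_of_eventuallyEq (f := fun _ => rightSlope c m α u) ?_ rfl
  rcases hu.1.eq_or_lt with rfl | hsu
  · exact nhdsWithin_mono _ Icc_subset_Ici_self (eventually_rightSlope_eq α _)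
  · refine nhdsWithin_le_nhds ?_
    rw [← nhdsLT_sup_nhdsGE]
    refine eventually_sup.2 ⟨?_, eventually_rightSlope_eq α u⟩
    filter_upwards [eventually_rightSlope_eq_leftSlope α u] with u' hu'
    rw [hu', h u ⟨hsu, hu.2⟩]

lemma rightSlope_eq_of_forall_leftSlope_eq {α : Fin N} {s t : ℝ} (hst : s ≤ t)
    (h : ∀ u ∈ Ioc s t, leftSlope c m α u = rightSlope c m α u) {u : ℝ} (hu : u ∈ Icc s t) :
    rightSlope c m α u = rightSlope c m α s :=
  isPreconnected_Icc.constant_of_mapsTo (finite_range m).isDiscrete (continuousOn_rightSlope h)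
    (fun _ _ => mem_range_self _) hu (left_mem_Icc.2 hst)

lemma orderStat_eq_of_forall_leftSlope_eq {α : Fin N} {s t : ℝ} (hst : s ≤ t)
    (h : ∀ u ∈ Ioc s t, leftSlope c m α u = rightSlope c m α u) {u : ℝ} (hu : u ∈ Icc s t) :
    orderStat c m α u = orderStat c m α s + (u - s) * rightSlope c m α s := by
  refine eq_of_has_deriv_right_eq (f' := fun _ => rightSlope c m α s)
    (g := fun u => orderStat c m α s + (u - s) * rightSlope c m α s) (fun x hx => ?_)
    (fun x _ => ?_) (continuous_orderStat α).continuousOn (by fun_prop) (by ring) u hu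
  · rw [← rightSlope_eq_of_forall_leftSlope_eq hst h (Ico_subset_Icc_self hx)]
    exact hasDerivWithinAt_orderStat_Ici α x
  · exact (((hasDerivAt_id' x).sub_const s).mul_const _ |>.const_add _).hasDerivWithinAt.congr_deriv
      (one_mul _)

section Crossing

variable {t : ℝ} {i j : Fin N}

lemma leftOrder_symm_lt (hmeet : traj c m i t = traj c m j t) (hm : m j < m i) :
    (leftOrder c m t).symm i < (leftOrder c m t).symm j := by
  refine (Tuple.monotone_sort fun k => toLex (traj c m k t, -m k)).reflect_lt ?_
  change toLex (traj c m (leftOrder c m t _) t, -m (leftOrder c m t _)) <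
    toLex (traj c m (leftOrder c m t _) t, -m (leftOrder c m t _))
  simp only [Equiv.apply_symm_apply]
  exact Prod.Lex.lt_iff.2 (Or.inr ⟨hmeet, neg_lt_neg hm⟩)

lemma rightOrder_symm_lt (hmeet : traj c m i t = traj c m j t) (hm : m j < m i) :
    (rightOrder c m t).symm j < (rightOrder c m t).symm i := by
  refine (Tuple.monotone_sort fun k => toLex (traj c m k t, m k)).reflect_lt ?_
  change toLex (traj c m (rightOrder c m t _) t, m (rightOrder c m t _)) <
    toLex (traj c m (rightOrder c m t _) t, m (rightOrder c m t _))
  simp only [Equiv.apply_symm_apply]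
  exact Prod.Lex.lt_iff.2 (Or.inr ⟨hmeet.symm, hm⟩)

lemma eq_or_eq_of_traj_eq (hs : SimpleCrossings c m) (hij : i ≠ j)
    (hmeet : traj c m i t = traj c m j t) {k : Fin N} (hk : traj c m k t = traj c m i t) :
    k = i ∨ k = j := by
  by_contra! hne
  have := hs t i j k i hij hne.1 hmeet hk
  rw [Sym2.eq_iff] at this
  tauto

lemma orderStat_eq_traj_iff (hs : SimpleCrossings c m) (hij : i ≠ j)
    (hmeet : traj c m i t = traj c m j t) {σ : Equiv.Perm (Fin N)}
    (hσ : ∀ β, orderStat c m β t = traj c m (σ β) t) (β : Fin N) :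
    orderStat c m β t = traj c m i t ↔ β = σ.symm i ∨ β = σ.symm j := by
  rw [hσ, Equiv.eq_symm_apply, Equiv.eq_symm_apply]
  refine ⟨eq_or_eq_of_traj_eq hs hij hmeet, ?_⟩
  rintro (h | h) <;> rw [h]
  exact hmeet.symm

lemma rightOrder_leftOrder_symm (hs : SimpleCrossings c m)
    (hmeet : traj c m i t = traj c m j t) (hm : m j < m i) :
    rightOrder c m t ((leftOrder c m t).symm i) = j ∧
      rightOrder c m t ((leftOrder c m t).symm j) = i := by
  have hij : i ≠ j := fun h => hm.ne (by rw [h])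
  have hL := orderStat_eq_traj_iff hs hij hmeet (orderStat_eq_traj_leftOrder · t)
  have hR := orderStat_eq_traj_iff hs hij hmeet (orderStat_eq_traj_rightOrder · t)
  have hρ := (hL _).1 ((hR _).2 (Or.inr rfl))
  have hρ' := (hL _).1 ((hR _).2 (Or.inl rfl))
  have hlt := leftOrder_symm_lt hmeet hm
  have hlt' := rightOrder_symm_lt hmeet hm
  rw [← Equiv.eq_symm_apply (rightOrder c m t), ← Equiv.eq_symm_apply (rightOrder c m t)]
  rcases hρ with h | h <;> rcases hρ' with h' | h' <;> rw [h, h'] at hlt'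
  · order
  · exact ⟨h.symm, h'.symm⟩
  · order
  · order

lemma leftOrder_symm_adjacent (hs : SimpleCrossings c m)
    (hmeet : traj c m i t = traj c m j t) (hm : m j < m i) :
    ((leftOrder c m t).symm j : ℕ) = (leftOrder c m t).symm i + 1 := by
  have hij : i ≠ j := fun h => hm.ne (by rw [h])
  have hL := orderStat_eq_traj_iff hs hij hmeet (orderStat_eq_traj_leftOrder · t)
  have hlt := leftOrder_symm_lt hmeet hm
  by_contra hne
  let β : Fin N := ⟨(leftOrder c m t).symm i + 1, by omega⟩
  have hβ : (leftOrder c m t).symm i < β ∧ β < (leftOrder c m t).symm j := by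
    constructor <;> rw [Fin.lt_def] <;> dsimp only [β] <;> omega
  have hv : orderStat c m β t = traj c m i t := le_antisymm
    (((monotone_orderStat t) hβ.2.le).trans ((hL _).2 (Or.inr rfl)).le)
    (((hL _).2 (Or.inl rfl)).ge.trans ((monotone_orderStat t) hβ.1.le))
  rcases (hL β).1 hv with h | h <;> rw [h] at hβ
  exacts [lt_irrefl _ hβ.1, lt_irrefl _ hβ.2]

end Crossing

lemma rightOrder_eq_leftOrder_of_unique {t : ℝ} {β : Fin N}
    (h : ∀ k, traj c m k t = traj c m (leftOrder c m t β) t → k = leftOrder c m t β) :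
    rightOrder c m t β = leftOrder c m t β :=
  h _ (by rw [← orderStat_eq_traj_rightOrder, ← orderStat_eq_traj_leftOrder])

lemma exists_orderStat_eq_of_slope_ne {t : ℝ} {γ : Fin N}
    (h : leftSlope c m γ t ≠ rightSlope c m γ t) :
    ∃ δ, δ ≠ γ ∧ orderStat c m δ t = orderStat c m γ t := by
  by_contra! hno
  refine h (congrArg m (rightOrder_eq_leftOrder_of_unique fun k hk => ?_)).symm
  have hδ := hno ((leftOrder c m t).symm k)
  rw [orderStat_eq_traj_leftOrder, orderStat_eq_traj_leftOrder, Equiv.apply_symm_apply] at hδ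
  by_contra hne
  exact hδ (fun he => hne (by rw [← he, Equiv.apply_symm_apply])) hk

lemma exists_traj_eq_of_slope_ne {t : ℝ} {γ : Fin N}
    (h : leftSlope c m γ t ≠ rightSlope c m γ t) :
    ∃ i j, i ≠ j ∧ traj c m i t = traj c m j t := by
  obtain ⟨δ, hδ, he⟩ := exists_orderStat_eq_of_slope_ne h
  exact ⟨_, _, (leftOrder c m t).injective.ne hδ,
    by rwa [← orderStat_eq_traj_leftOrder, ← orderStat_eq_traj_leftOrder]⟩

lemma sym2_eq_of_orderStat_eq (hs : SimpleCrossings c m) {t : ℝ} {β γ β' γ' : Fin N}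
    (h : β ≠ γ) (h' : β' ≠ γ') (he : orderStat c m β t = orderStat c m γ t)
    (he' : orderStat c m β' t = orderStat c m γ' t) : s(β, γ) = s(β', γ') := by
  simp only [orderStat_eq_traj_leftOrder] at he he'
  have := hs t _ _ _ _ ((leftOrder c m t).injective.ne h) ((leftOrder c m t).injective.ne h') he he'
  exact Sym2.map.injective (leftOrder c m t).injective (by simpa only [Sym2.map_mk] using this)

lemma finite_setOf_exists_traj_eq (hc : Function.Injective c) :
    {t | ∃ i j, i ≠ j ∧ traj c m i t = traj c m j t}.Finite := by
  have : {t | ∃ i j, i ≠ j ∧ traj c m i t = traj c m j t} =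
      ⋃ i, ⋃ j, {t | i ≠ j ∧ traj c m i t = traj c m j t} := by
    ext; simp
  rw [this]
  refine finite_iUnion fun i => finite_iUnion fun j => Set.Subsingleton.finite ?_
  rintro t ⟨hij, ht⟩ t' ⟨-, ht'⟩
  have hm : m i ≠ m j := fun hm => hij (hc (by simp only [traj, hm] at ht; linarith))
  simp only [traj] at ht ht'
  have : (m i - m j) * (t - t') = 0 := by linarith
  exact sub_eq_zero.1 ((mul_eq_zero.1 this).resolve_left (sub_ne_zero.2 hm))

variable (c m) in
structure IsCollision (t : ℝ) (α β : Fin N) : Prop where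
  orderStat_eq : orderStat c m α t = orderStat c m β t
  abs_sub_eq_one : |(β : ℝ) - α| = 1
  exchange_left : leftSlope c m α t = rightSlope c m β t
  exchange_right : leftSlope c m β t = rightSlope c m α t
  approach : (leftSlope c m β t - leftSlope c m α t) * ((β : ℝ) - α) < 0

namespace IsCollision

variable {t : ℝ} {α β : Fin N}

lemma symm (h : IsCollision c m t α β) : IsCollision c m t β α where
  orderStat_eq := h.orderStat_eq.symm
  abs_sub_eq_one := by rw [abs_sub_comm, h.abs_sub_eq_one]
  exchange_left := h.exchange_right
  exchange_right := h.exchange_left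
  approach := by linarith [h.approach]

lemma ne (h : IsCollision c m t α β) : α ≠ β := by
  rintro rfl
  simpa using h.abs_sub_eq_one

lemma sym2_eq (hs : SimpleCrossings c m) (h : IsCollision c m t α β) {β' γ' : Fin N}
    (hne : β' ≠ γ') (he : orderStat c m β' t = orderStat c m γ' t) : s(β', γ') = s(α, β) :=
  sym2_eq_of_orderStat_eq hs hne h.ne he h.orderStat_eq

lemma eq_or_eq_of_slope_ne (hs : SimpleCrossings c m) (h : IsCollision c m t α β) {γ : Fin N}
    (hγ : leftSlope c m γ t ≠ rightSlope c m γ t) : γ = α ∨ γ = β := by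
  obtain ⟨δ, hδ, he⟩ := exists_orderStat_eq_of_slope_ne hγ
  have := h.sym2_eq hs hδ.symm he.symm
  rw [Sym2.eq_iff] at this
  tauto

lemma slope_eq_of_ne (hs : SimpleCrossings c m) (h : IsCollision c m t α β) {γ : Fin N}
    (hα : γ ≠ α) (hβ : γ ≠ β) : leftSlope c m γ t = rightSlope c m γ t := by
  by_contra hγ
  rcases h.eq_or_eq_of_slope_ne hs hγ with h' | h' <;> contradiction

lemma sum_abs_rightSlope_sub_leftSlope (hs : SimpleCrossings c m) (h : IsCollision c m t α β) :
    ∑ γ, |rightSlope c m γ t - leftSlope c m γ t| =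
      2 * |leftSlope c m α t - leftSlope c m β t| := by
  have hrest : ∀ γ, γ ≠ α ∧ γ ≠ β → |rightSlope c m γ t - leftSlope c m γ t| = 0 :=
    fun γ hγ => by rw [h.slope_eq_of_ne hs hγ.1 hγ.2, sub_self, abs_zero]
  rw [Fintype.sum_eq_add α β h.ne hrest, ← h.exchange_left, ← h.exchange_right, abs_sub_comm]
  ring

end IsCollision

lemma isCollision_leftOrder_symm (hs : SimpleCrossings c m) {t : ℝ} {i j : Fin N}
    (hmeet : traj c m i t = traj c m j t) (hm : m j < m i) :
    IsCollision c m t ((leftOrder c m t).symm i) ((leftOrder c m t).symm j) := by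
  have hadj : (((leftOrder c m t).symm j : ℕ) : ℝ) = ((leftOrder c m t).symm i : ℕ) + 1 := by
    exact_mod_cast leftOrder_symm_adjacent hs hmeet hm
  obtain ⟨hri, hrj⟩ := rightOrder_leftOrder_symm hs hmeet hm
  refine ⟨?_, ?_, ?_, ?_, ?_⟩
  · simp only [orderStat_eq_traj_leftOrder, Equiv.apply_symm_apply, hmeet]
  · simp [hadj]
  · simp only [leftSlope, rightSlope, Equiv.apply_symm_apply, hrj]
  · simp only [leftSlope, rightSlope, Equiv.apply_symm_apply, hri]
  · simp only [leftSlope, Equiv.apply_symm_apply, hadj]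
    linarith

lemma exists_isCollision_of_slope_ne (hc : Function.Injective c) (hs : SimpleCrossings c m)
    {t : ℝ} {α : Fin N} (h : leftSlope c m α t ≠ rightSlope c m α t) :
    ∃ β, IsCollision c m t α β := by
  obtain ⟨δ, hδ, he⟩ := exists_orderStat_eq_of_slope_ne h
  rw [orderStat_eq_traj_leftOrder, orderStat_eq_traj_leftOrder] at he
  have hm : m (leftOrder c m t δ) ≠ m (leftOrder c m t α) := fun hm =>
    hδ ((leftOrder c m t).injective (hc (by simp only [traj, hm] at he; linarith)))
  refine ⟨δ, ?_⟩
  rcases hm.lt_or_gt with hlt | hlt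
  · simpa using isCollision_leftOrder_symm hs he.symm hlt
  · simpa using (isCollision_leftOrder_symm hs he hlt).symm

section Position

variable (c m) in
def position (a : ℝ) (α : Fin N) (t : ℝ) : ℝ := orderStat c m α t + 2 * a * α

variable {a t : ℝ} {α β : Fin N}

lemma add_two_mul_le_position_sub (ha : 0 ≤ a) (h : α < β) :
    orderStat c m β t - orderStat c m α t + 2 * a ≤ position c m a β t - position c m a α t := by
  have hαβ : (α : ℝ) + 1 ≤ β := by exact_mod_cast Fin.lt_def.1 h
  simp only [position]
  nlinarith

lemma two_mul_le_abs_position_sub (ha : 0 ≤ a) (h : α ≠ β) :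
    2 * a ≤ |position c m a β t - position c m a α t| := by
  wlog hlt : α < β generalizing α β
  · rw [abs_sub_comm]
    exact this h.symm (h.lt_or_gt.resolve_left hlt)
  have hle := monotone_orderStat (c := c) (m := m) t hlt.le
  linarith [add_two_mul_le_position_sub (c := c) (m := m) (t := t) ha hlt,
    le_abs_self (position c m a β t - position c m a α t)]

lemma orderStat_eq_of_abs_position_sub (ha : 0 ≤ a) (h : α ≠ β)
    (he : |position c m a β t - position c m a α t| = 2 * a) :
    orderStat c m α t = orderStat c m β t := by
  wlog hlt : α < β generalizing α β
  · rw [abs_sub_comm] at he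
    exact (this h.symm he (h.lt_or_gt.resolve_left hlt)).symm
  refine le_antisymm (monotone_orderStat t hlt.le) ?_
  linarith [add_two_mul_le_position_sub (c := c) (m := m) (t := t) ha hlt,
    le_abs_self (position c m a β t - position c m a α t)]

lemma IsCollision.position_sub (h : IsCollision c m t α β) :
    position c m a β t - position c m a α t = 2 * a * ((β : ℝ) - α) := by
  simp only [position, h.orderStat_eq]
  ring

lemma IsCollision.abs_position_sub (ha : 0 ≤ a) (h : IsCollision c m t α β) :
    |position c m a β t - position c m a α t| = 2 * a := by
  rw [h.position_sub, abs_mul, h.abs_sub_eq_one, abs_of_nonneg (by linarith), mul_one]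

lemma IsCollision.eq_of_abs_position_sub (hs : SimpleCrossings c m) (ha : 0 ≤ a)
    (h : IsCollision c m t α β) {γ : Fin N} (hγ : γ ≠ α)
    (hd : |position c m a γ t - position c m a α t| = 2 * a) : γ = β := by
  have := h.sym2_eq hs hγ (orderStat_eq_of_abs_position_sub ha hγ.symm hd).symm
  rw [Sym2.eq_iff] at this
  tauto

end Position

end FreeLines

def realToEuclidean : ℝ ≃ₗᵢ[ℝ] EuclideanSpace ℝ (Fin 1) :=
  (OrthonormalBasis.singleton (Fin 1) ℝ).repr

lemma realToEuclidean_apply (x : ℝ) (k : Fin 1) : realToEuclidean x k = x :=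
  OrthonormalBasis.singleton_repr x k

lemma realToEuclidean_one : realToEuclidean 1 = EuclideanSpace.single 0 1 := by
  ext k
  simp [realToEuclidean_apply, Fin.fin_one_eq_zero k]

lemma dist_realToEuclidean (x y : ℝ) :
    dist (realToEuclidean x) (realToEuclidean y) = |x - y| := by
  rw [LinearIsometryEquiv.dist_map, Real.dist_eq]

lemma inner_realToEuclidean (x y : ℝ) :
    ⟪realToEuclidean x, realToEuclidean y⟫ = x * y := by
  rw [LinearIsometryEquiv.inner_map_map]
  simp [mul_comm]

namespace HardSphereFlow

section

variable {n N : ℕ} (F : HardSphereFlow n N)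

lemma hodographLength_eq_sum {α : Fin N} {T : Finset ℝ} (hT : F.KinkTimes α ⊆ T) :
    F.hodographLength α = ∑ t ∈ T, ‖F.v α t - F.vIn α t‖ := by
  have hsupp : Function.support (fun t => ‖F.v α t - F.vIn α t‖) ⊆ F.KinkTimes α :=
    fun t ht h => ht (by simp only [h, sub_self, norm_zero])
  rw [hodographLength, tsum_subtype_eq_of_support_subset hsupp]
  exact tsum_eq_sum fun t ht => Function.notMem_support.1 fun h => ht (hT (hsupp h))

lemma meanVelocity_eq_zero (hQ : ∑ α, F.v α 0 = 0) : F.meanVelocity = 0 := by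
  rw [meanVelocity, hQ, smul_zero]

lemma vdev_eq_one (hN : 0 < N) (hQ : ∑ α, F.v α 0 = 0) (hv : ∀ α, ‖F.v α 0‖ = 1) :
    F.vdev = 1 := by
  have hE : F.totalEnergy = N / 2 := by
    simp only [totalEnergy, hv, one_pow, Finset.sum_const, Finset.card_univ, Fintype.card_fin,
      nsmul_eq_mul, mul_one]
    ring
  rw [vdev, vbar, F.meanVelocity_eq_zero hQ, hE, norm_zero]
  field_simp
  simp

end

open FreeLines

variable {N : ℕ} {c m : Fin N → ℝ}

def ofLines (a : ℝ) (ha : 0 < a) (hc : Function.Injective c) (hs : SimpleCrossings c m) :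
    HardSphereFlow 1 N where
  a := a
  a_pos := ha
  y α t := realToEuclidean (position c m a α t)
  v α t := realToEuclidean (rightSlope c m α t)
  vIn α t := realToEuclidean (leftSlope c m α t)
  y_continuous α :=
    realToEuclidean.continuous.comp ((continuous_orderStat α).add continuous_const)
  v_right_deriv α t := realToEuclidean.hasFDerivAt.comp_hasDerivWithinAt t
    ((hasDerivWithinAt_orderStat_Ici α t).add_const _)
  vIn_left_limit α t := (eventually_rightSlope_eq_leftSlope α t).mono fun _ hu => congrArg _ hu
  piecewise_affine α s t hst h := by
    have h' : ∀ u ∈ Ioc s t, leftSlope c m α u = rightSlope c m α u :=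
      fun u hu => realToEuclidean.injective (h u hu.1 hu.2)
    refine ⟨congrArg _ (rightSlope_eq_of_forall_leftSlope_eq hst h' (right_mem_Icc.2 hst)), ?_⟩
    rw [← map_smul, ← map_add, position, position,
      orderStat_eq_of_forall_leftSlope_eq hst h' (right_mem_Icc.2 hst), smul_eq_mul]
    ring_nf
  kinks_finite α t₁ t₂ := (finite_setOf_exists_traj_eq hc).subset fun t ⟨_, ht⟩ =>
    exists_traj_eq_of_slope_ne (ne_of_apply_ne _ ht)
  no_overlap t α β h := by
    rw [dist_realToEuclidean]
    exact two_mul_le_abs_position_sub ha.le h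
  partner_unique α t hα := by
    obtain ⟨β, hcol⟩ := exists_isCollision_of_slope_ne hc hs (ne_of_apply_ne _ hα)
    refine ⟨β, ⟨hcol.ne.symm, ?_⟩, fun γ ⟨hγ, hd⟩ => ?_⟩
    · rw [dist_realToEuclidean]
      exact hcol.abs_position_sub ha.le
    · rw [dist_realToEuclidean] at hd
      exact hcol.eq_of_abs_position_sub hs ha.le hγ hd
  collision_rules α β t hα hβα hd := by
    obtain ⟨β', hcol⟩ := exists_isCollision_of_slope_ne hc hs (ne_of_apply_ne _ hα)
    rw [dist_realToEuclidean] at hd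
    obtain rfl := hcol.eq_of_abs_position_sub hs ha.le hβα hd
    rw [← hcol.exchange_left, ← hcol.exchange_right, ← map_sub, ← map_sub, ← map_sub,
      inner_realToEuclidean, inner_realToEuclidean, hcol.position_sub]
    have happ := hcol.approach
    have hd0 : 2 * a * ((β : ℝ) - α) ≠ 0 :=
      mul_ne_zero (by linarith)
        (sub_ne_zero.2 (by exact_mod_cast Fin.val_injective.ne hcol.ne.symm))
    refine ⟨fun he => ?_, add_comm _ _, add_comm _ _, rfl,
      ⟨(leftSlope c m β t - leftSlope c m α t) / (2 * a * ((β : ℝ) - α)), ?_⟩,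
      by nlinarith, by nlinarith⟩
    · rw [realToEuclidean.injective he, sub_self, zero_mul] at happ
      exact lt_irrefl _ happ
    · rw [← map_smul, smul_eq_mul, div_mul_cancel₀ _ hd0]
  one_collision_at_a_time t α β hα hβ hβα := by
    obtain ⟨β', hcol⟩ := exists_isCollision_of_slope_ne hc hs (ne_of_apply_ne _ hα)
    rcases hcol.eq_or_eq_of_slope_ne hs (ne_of_apply_ne _ hβ) with rfl | rfl
    · exact absurd rfl hβα
    · rw [dist_realToEuclidean]
      exact hcol.abs_position_sub ha.le

end HardSphereFlow

lemma two_pow_sub_two_pow_lt {a b a' b' : ℕ} (h' : a' < b') (hb : b < b') :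
    (2 : ℝ) ^ b - 2 ^ a < 2 ^ b' - 2 ^ a' := by
  have h1 : (2 : ℝ) ^ (b + 1) ≤ 2 ^ b' := pow_le_pow_right₀ one_le_two hb
  have h2 : (2 : ℝ) ^ (a' + 1) ≤ 2 ^ b' := pow_le_pow_right₀ one_le_two h'
  have h3 : (0 : ℝ) < 2 ^ a := by positivity
  rw [pow_succ] at h1 h2
  linarith

lemma two_pow_sub_two_pow_inj {a b a' b' : ℕ} (h : a < b) (h' : a' < b')
    (he : (2 : ℝ) ^ b - 2 ^ a = 2 ^ b' - 2 ^ a') : a = a' ∧ b = b' := by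
  obtain rfl : b = b' := by
    rcases lt_trichotomy b b' with hb | hb | hb
    · exact absurd he (two_pow_sub_two_pow_lt h' hb).ne
    · exact hb
    · exact absurd he (two_pow_sub_two_pow_lt h hb).ne'
  exact ⟨pow_right_injective₀ two_pos (by norm_num) (by linarith : (2 : ℝ) ^ a = 2 ^ a'), rfl⟩

namespace TwoBeams

open FreeLines

variable {p : ℕ}

variable (p) in
def slope (k : Fin (2 * p)) : ℝ := if (k : ℕ) < p then 1 else -1

variable (p) in
def intercept (k : Fin (2 * p)) : ℝ := 2 ^ (k : ℕ)

def rightMover (i : Fin p) : Fin (2 * p) := ⟨i, by omega⟩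

def leftMover (j : Fin p) : Fin (2 * p) := ⟨p + j, by omega⟩

variable (p) in
def crossingTime (q : Fin p × Fin p) : ℝ := (2 ^ (p + q.2 : ℕ) - 2 ^ (q.1 : ℕ)) / 2

variable (p) in
def crossingTimes : Finset ℝ := Finset.univ.image (crossingTime p)

lemma strictMono_intercept : StrictMono (intercept p) :=
  fun _ _ h => pow_lt_pow_right₀ one_lt_two h

lemma rightMover_or_leftMover (k : Fin (2 * p)) :
    (∃ i, k = rightMover i) ∨ ∃ j, k = leftMover j := by
  rcases lt_or_ge (k : ℕ) p with hk | hk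
  · exact Or.inl ⟨⟨k, hk⟩, rfl⟩
  · exact Or.inr ⟨⟨k - p, by omega⟩, Fin.ext (Nat.add_sub_cancel' hk).symm⟩

lemma slope_rightMover (i : Fin p) : slope p (rightMover i) = 1 := if_pos i.isLt

lemma slope_leftMover (j : Fin p) : slope p (leftMover j) = -1 :=
  if_neg (Nat.not_lt.2 (Nat.le_add_right p j))

lemma traj_rightMover (i : Fin p) (t : ℝ) :
    traj (intercept p) (slope p) (rightMover i) t = 2 ^ (i : ℕ) + t := by
  rw [traj, slope_rightMover, one_mul]
  rfl

lemma traj_leftMover (j : Fin p) (t : ℝ) :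
    traj (intercept p) (slope p) (leftMover j) t = 2 ^ (p + j : ℕ) - t := by
  rw [traj, slope_leftMover, neg_one_mul]
  rfl

lemma traj_rightMover_eq_traj_leftMover (q : Fin p × Fin p) :
    traj (intercept p) (slope p) (rightMover q.1) (crossingTime p q) =
      traj (intercept p) (slope p) (leftMover q.2) (crossingTime p q) := by
  rw [traj_rightMover, traj_leftMover, crossingTime]
  ring

lemma crossingTime_injective : Function.Injective (crossingTime p) := by
  intro q q' h
  obtain ⟨hi, hj⟩ := two_pow_sub_two_pow_inj (by omega) (by omega)
    (by simpa [crossingTime] using h :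
      (2 : ℝ) ^ (p + q.2 : ℕ) - 2 ^ (q.1 : ℕ) = 2 ^ (p + q'.2 : ℕ) - 2 ^ (q'.1 : ℕ))
  exact Prod.ext (Fin.ext hi) (Fin.ext (by omega))

lemma card_crossingTimes : (crossingTimes p).card = p ^ 2 := by
  rw [crossingTimes, Finset.card_image_of_injective _ crossingTime_injective]
  simp [sq]

lemma exists_crossingTime_of_traj_eq {k l : Fin (2 * p)} {t : ℝ} (hkl : k ≠ l)
    (h : traj (intercept p) (slope p) k t = traj (intercept p) (slope p) l t) :
    ∃ q, t = crossingTime p q ∧ s(k, l) = s(rightMover q.1, leftMover q.2) := by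
  rcases rightMover_or_leftMover k with ⟨i, rfl⟩ | ⟨j, rfl⟩ <;>
    rcases rightMover_or_leftMover l with ⟨i', rfl⟩ | ⟨j', rfl⟩ <;>
    simp only [traj_rightMover, traj_leftMover] at h
  · have := pow_right_injective₀ two_pos (by norm_num)
      (by linarith : (2 : ℝ) ^ (i : ℕ) = 2 ^ (i' : ℕ))
    exact absurd (congrArg rightMover (Fin.ext this)) hkl
  · exact ⟨(i, j'), by rw [crossingTime]; linarith, rfl⟩
  · exact ⟨(i', j), by rw [crossingTime]; linarith, Sym2.eq_swap⟩
  · have := pow_right_injective₀ two_pos (by norm_num)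
      (by linarith : (2 : ℝ) ^ (p + j : ℕ) = 2 ^ (p + j' : ℕ))
    exact absurd (congrArg leftMover (Fin.ext (by omega))) hkl

lemma simpleCrossings : SimpleCrossings (intercept p) (slope p) := by
  intro t i j k l hij hkl hi hk
  obtain ⟨q, rfl, hq⟩ := exists_crossingTime_of_traj_eq hij hi
  obtain ⟨q', hqq', hq'⟩ := exists_crossingTime_of_traj_eq hkl hk
  rw [hq, hq', crossingTime_injective hqq']

lemma slope_leftMover_lt_slope_rightMover (i j : Fin p) :
    slope p (leftMover j) < slope p (rightMover i) := by
  rw [slope_leftMover, slope_rightMover]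
  norm_num

lemma sum_abs_rightSlope_sub_leftSlope_crossingTime (q : Fin p × Fin p) :
    ∑ γ, |rightSlope (intercept p) (slope p) γ (crossingTime p q) -
      leftSlope (intercept p) (slope p) γ (crossingTime p q)| = 4 := by
  rw [(isCollision_leftOrder_symm simpleCrossings (traj_rightMover_eq_traj_leftMover q)
    (slope_leftMover_lt_slope_rightMover q.1 q.2)).sum_abs_rightSlope_sub_leftSlope simpleCrossings,
    leftSlope, leftSlope, Equiv.apply_symm_apply, Equiv.apply_symm_apply, slope_rightMover,
    slope_leftMover]
  norm_num

lemma rightOrder_zero : rightOrder (intercept p) (slope p) 0 = Equiv.refl _ := by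
  refine Tuple.sort_eq_refl_iff_monotone.2 (StrictMono.monotone fun k l h => ?_)
  exact Prod.Lex.lt_iff.2 (Or.inl (by simpa [traj] using strictMono_intercept h))

lemma sum_slope : ∑ k, slope p k = 0 := by
  unfold slope
  rw [Fin.sum_univ_eq_sum_range (fun k => if k < p then (1 : ℝ) else -1), two_mul,
    Finset.sum_range_add, Finset.sum_congr rfl fun k hk => if_pos (Finset.mem_range.1 hk)]
  simp

variable (p) in
def flow : HardSphereFlow 1 (2 * p) :=
  HardSphereFlow.ofLines 1 one_pos strictMono_intercept.injective simpleCrossings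

lemma flow_v_zero (α : Fin (2 * p)) : (flow p).v α 0 = realToEuclidean (slope p α) := by
  change realToEuclidean (rightSlope _ _ α 0) = _
  rw [rightSlope, rightOrder_zero]
  rfl

lemma flow_y_zero (α : Fin (2 * p)) : (flow p).y α 0 0 = 2 ^ (α : ℕ) + 2 * α := by
  change realToEuclidean (position _ _ 1 α 0) 0 = _
  rw [realToEuclidean_apply, position, orderStat_eq_traj_rightOrder, rightOrder_zero]
  simp [traj, intercept]

lemma kinkTimes_flow_subset (α : Fin (2 * p)) : (flow p).KinkTimes α ⊆ crossingTimes p := by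
  intro t ht
  have ht' : leftSlope (intercept p) (slope p) α t ≠ rightSlope (intercept p) (slope p) α t :=
    ne_of_apply_ne realToEuclidean ht
  obtain ⟨k, l, hkl, h⟩ := exists_traj_eq_of_slope_ne ht'
  obtain ⟨q, rfl, -⟩ := exists_crossingTime_of_traj_eq hkl h
  exact Finset.mem_image_of_mem _ (Finset.mem_univ q)

lemma sum_norm_flow_v_sub_vIn {t : ℝ} (ht : t ∈ crossingTimes p) :
    ∑ α, ‖(flow p).v α t - (flow p).vIn α t‖ = 4 := by
  obtain ⟨q, -, rfl⟩ := Finset.mem_image.1 ht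
  change ∑ α, ‖realToEuclidean _ - realToEuclidean _‖ = 4
  simp_rw [← map_sub, LinearIsometryEquiv.norm_map, Real.norm_eq_abs]
  exact sum_abs_rightSlope_sub_leftSlope_crossingTime q

lemma flow_v_zero_eq_ite (α : Fin (2 * p)) :
    (flow p).v α 0 =
      if (α : ℕ) < p then EuclideanSpace.single 0 1 else -EuclideanSpace.single 0 1 := by
  rw [flow_v_zero, slope, apply_ite realToEuclidean, map_neg, realToEuclidean_one]

lemma sum_flow_v_zero : ∑ α, (flow p).v α 0 = 0 := by
  simp_rw [flow_v_zero, ← map_sum, sum_slope, map_zero]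

lemma norm_flow_v_zero (α : Fin (2 * p)) : ‖(flow p).v α 0‖ = 1 := by
  rw [flow_v_zero, LinearIsometryEquiv.norm_map, slope]
  split_ifs <;> norm_num

lemma flow_y_zero_lt {α β : Fin (2 * p)} (h : α < β) : (flow p).y α 0 0 < (flow p).y β 0 0 := by
  rw [flow_y_zero, flow_y_zero]
  have h2 : (2 : ℝ) ^ (α : ℕ) < 2 ^ (β : ℕ) := pow_lt_pow_right₀ one_lt_two h
  have hαβ : ((α : ℕ) : ℝ) < β := by exact_mod_cast h
  linarith

lemma sum_hodographLength_flow : ∑ α, (flow p).hodographLength α = ((2 * p : ℕ) : ℝ) ^ 2 :=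
  calc ∑ α, (flow p).hodographLength α
      = ∑ α, ∑ t ∈ crossingTimes p, ‖(flow p).v α t - (flow p).vIn α t‖ :=
        Finset.sum_congr rfl fun α _ => (flow p).hodographLength_eq_sum (kinkTimes_flow_subset α)
    _ = ∑ t ∈ crossingTimes p, 4 := by
        rw [Finset.sum_comm]
        exact Finset.sum_congr rfl fun t ht => sum_norm_flow_v_sub_vIn ht
    _ = ((2 * p : ℕ) : ℝ) ^ 2 := by
        rw [Finset.sum_const, card_crossingTimes, nsmul_eq_mul]
        push_cast
        ring

end TwoBeams

/-- **Sharpness of the hodograph length estimate** (Serre, Section 1.2).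
For every `p ≥ 1` there is a hard-sphere flow of `N = 2p` particles on the line (`n = 1`),
consisting of `p` particles with initial velocity `+1` placed to the left of `p` particles
with initial velocity `-1`, which has mean velocity `w = 0`, standard deviation `𝐯 = 1`,
and `∑_α ℓ(H_α) = N²`. Hence `∑_α ℓ(H_α) ≤ c_n N² 𝐯` is sharp up to the constant. -/
theorem hard_spheres_hodograph_estimate_sharp (p : ℕ) (hp : 1 ≤ p) :
    ∃ F : HardSphereFlow 1 (2 * p),
      (∀ α : Fin (2 * p), F.v α 0 =
        if (α : ℕ) < p then (EuclideanSpace.single 0 1 : EuclideanSpace ℝ (Fin 1))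
        else -(EuclideanSpace.single 0 1 : EuclideanSpace ℝ (Fin 1))) ∧
      (∀ α β : Fin (2 * p), (α : ℕ) < p → p ≤ (β : ℕ) → F.y α 0 0 < F.y β 0 0) ∧
      F.meanVelocity = 0 ∧ F.vdev = 1 ∧
      ∑ α : Fin (2 * p), F.hodographLength α = ((2 * p : ℕ) : ℝ) ^ 2 :=
  ⟨TwoBeams.flow p, TwoBeams.flow_v_zero_eq_ite,
    fun _ _ hα hβ => TwoBeams.flow_y_zero_lt (Fin.lt_def.2 (by omega)),
    (TwoBeams.flow p).meanVelocity_eq_zero TwoBeams.sum_flow_v_zero,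
    (TwoBeams.flow p).vdev_eq_one (by omega) TwoBeams.sum_flow_v_zero TwoBeams.norm_flow_v_zero,
    TwoBeams.sum_hodographLength_flow⟩
end
end

section
/- Let n ≥ 1 and let v, w, v', w' ∈ ℝ^n satisfy v + w = v' + w' and v' ≠ v. Set V₁ = −(1,v), V₂ = −(1,w), V₃ = (1,v'), V₄ = (1,w') in ℝ^{1+n} and Q = (0, v'−v). Let x̄_i, x̄_j ∈ ℝ^{1+n} be two points with x̄_i − x̄_j = λQ for some λ > 0, and let C = [x̄_j, x̄_i] be the segment from x̄_j to x̄_i. Then the tensor T = S^{V₁+}(from x̄_i) + S^{V₂+}(from x̄_j) + S^{V₃+}(from x̄_i) + S^{V₄+}(from x̄_j) + S^{Q,C} is divergence-free in the sense of distributions on ℝ^{1+n}: for every test function φ ∈ C_c^∞(ℝ^{1+n}), the vector ⟨Div T, φ⟩ = V₁φ(x̄_i) + V₃φ(x̄_i) + V₂φ(x̄_j) + V₄φ(x̄_j) − Q(φ(x̄_i) − φ(x̄_j)) equals zero. -/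
open scoped BigOperators
open MeasureTheory Set Filter Topology

noncomputable section

/-- The vector `(c, u) ∈ ℝ^{1+n}` built from a scalar `c` and a vector `u ∈ ℝⁿ`. -/
def consE {n : ℕ} (c : ℝ) (u : EuclideanSpace ℝ (Fin n)) :
    EuclideanSpace ℝ (Fin (n + 1)) :=
  (EuclideanSpace.equiv (Fin (n + 1)) ℝ).symm (Fin.cons c (fun j => u j))

/-- The `a`-component of the pairing `⟨Div S^{P+}, φ⟩ = -∑_b ⟨S^{P+}_{ab}, ∂_b φ⟩` of the
divergence of the semi-line tensor `S^{P+} = P ⊗ η δ_{L⁺}`, `L⁺ = x̄ + ℝ₊η`, `η = P/|P|`,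
against a test function `φ`. -/
def semiLineDivPair {d : ℕ} (P xbar : EuclideanSpace ℝ (Fin d))
    (φ : EuclideanSpace ℝ (Fin d) → ℝ) (a : Fin d) : ℝ :=
  -∑ b : Fin d, P a * (‖P‖⁻¹ • P) b *
    ∫ s in Set.Ioi (0 : ℝ),
      fderiv ℝ φ (xbar + s • (‖P‖⁻¹ • P)) (EuclideanSpace.single b 1)

/-- The `a`-component of the pairing `⟨Div S^{Q,C}, φ⟩ = -∑_b ⟨S^{Q,C}_{ab}, ∂_b φ⟩` of the
divergence of the colliton tensor `S^{Q,C} = Q ⊗ η δ_C`, where `C` is the segment from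
`x̄_j` to `x̄_i` of direction `η = Q/|Q|`, against a test function `φ`. -/
def segmentDivPair {d : ℕ} (Q xj xi : EuclideanSpace ℝ (Fin d))
    (φ : EuclideanSpace ℝ (Fin d) → ℝ) (a : Fin d) : ℝ :=
  -∑ b : Fin d, Q a * (‖Q‖⁻¹ • Q) b *
    ∫ s in (0 : ℝ)..(dist xi xj),
      fderiv ℝ φ (xj + s • (‖Q‖⁻¹ • Q)) (EuclideanSpace.single b 1)

local notation "E" d => EuclideanSpace ℝ (Fin d)

lemma sum_single_eq {d : ℕ} (x : E d) :
    ∑ b : Fin d, x b • EuclideanSpace.single b (1:ℝ) = x := by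
  ext c
  simp only [PiLp.smul_apply, EuclideanSpace.single_apply, smul_eq_mul]
  rw [WithLp.ofLp_sum, Finset.sum_apply]
  simp [Finset.sum_eq_single c]

lemma fderiv_apply_eta {d : ℕ} (φ : (E d) → ℝ) (y η : E d) :
    ∑ b : Fin d, η b * fderiv ℝ φ y (EuclideanSpace.single b 1) = fderiv ℝ φ y η := by
  have := map_sum (fderiv ℝ φ y) (fun b => η b • EuclideanSpace.single b (1:ℝ)) Finset.univ
  rw [sum_single_eq] at this
  rw [this]; simp

section line
variable {d : ℕ} (x η : E d) (φ : (E d) → ℝ)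

lemma line_isometry (hη : ‖η‖ = 1) : Isometry (fun s : ℝ => x + s • η) := by
  apply Isometry.of_dist_eq
  intro s t
  simp only [dist_eq_norm, add_sub_add_left_eq_sub, ← sub_smul, norm_smul, hη,
    Real.norm_eq_abs, mul_one]

lemma hasDerivAt_line (hφ : ContDiff ℝ (⊤ : ℕ∞) φ) (s : ℝ) :
    HasDerivAt (fun t => φ (x + t • η)) (fderiv ℝ φ (x + s • η) η) s := by
  have h1 : HasDerivAt (fun t : ℝ => x + t • η) η s := by
    simpa using ((hasDerivAt_id s).smul_const η).const_add x
  exact ((hφ.differentiable (by simp)).differentiableAt.hasFDerivAt).comp_hasDerivAt s h1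

lemma cont_integrand (hφ : ContDiff ℝ (⊤ : ℕ∞) φ) (ξ : E d) :
    Continuous (fun s : ℝ => fderiv ℝ φ (x + s • η) (ξ)) := by
  exact ((hφ.continuous_fderiv (by simp)).comp (by continuity)).clm_apply continuous_const

lemma hcs_integrand (hφc : HasCompactSupport φ) (hη : ‖η‖ = 1) (ξ : E d) :
    HasCompactSupport (fun s : ℝ => fderiv ℝ φ (x + s • η) (ξ)) := by
  have h1 : HasCompactSupport (fun s : ℝ => fderiv ℝ φ (x + s • η)) :=
    (HasCompactSupport.fderiv ℝ hφc).comp_isClosedEmbedding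
      (line_isometry x η hη).isClosedEmbedding
  exact h1.comp_left (g := fun L : (E d) →L[ℝ] ℝ => L ξ) (by simp)

lemma integrable_integrand (hφ : ContDiff ℝ (⊤ : ℕ∞) φ) (hφc : HasCompactSupport φ)
    (hη : ‖η‖ = 1) (ξ : E d) :
    Integrable (fun s : ℝ => fderiv ℝ φ (x + s • η) ξ) :=
  (cont_integrand x η φ hφ ξ).integrable_of_hasCompactSupport (hcs_integrand x η φ hφc hη ξ)

lemma integral_Ioi_dir (hφ : ContDiff ℝ (⊤ : ℕ∞) φ) (hφc : HasCompactSupport φ) (hη : ‖η‖ = 1) :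
    ∫ s in Set.Ioi (0:ℝ), fderiv ℝ φ (x + s • η) η = -φ x := by
  have hg : HasCompactSupport (fun t : ℝ => φ (x + t • η)) :=
    hφc.comp_isClosedEmbedding (line_isometry x η hη).isClosedEmbedding
  have hcont : Continuous (fun t : ℝ => φ (x + t • η)) := hφ.continuous.comp (by continuity)
  obtain ⟨R, hR0, hR⟩ := hg.exists_pos_le_norm
  have htend : Tendsto (fun t : ℝ => φ (x + t • η)) atTop (𝓝 0) := by
    apply Tendsto.congr' _ tendsto_const_nhds
    filter_upwards [eventually_ge_atTop R] with t ht
    exact (hR t (by simpa [Real.norm_eq_abs, abs_of_nonneg (hR0.le.trans ht)] using ht)).symm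
  have := integral_Ioi_of_hasDerivAt_of_tendsto (a := (0:ℝ))
    (f := fun t : ℝ => φ (x + t • η)) (f' := fun s => fderiv ℝ φ (x + s • η) η)
    (hcont.continuousWithinAt)
    (fun s _ => hasDerivAt_line x η φ hφ s)
    (integrable_integrand x η φ hφ hφc hη η).integrableOn htend
  simpa using this

lemma integral_seg_dir (hφ : ContDiff ℝ (⊤ : ℕ∞) φ) (L : ℝ) :
    ∫ s in (0:ℝ)..L, fderiv ℝ φ (x + s • η) η = φ (x + L • η) - φ x := by
  have := intervalIntegral.integral_eq_sub_of_hasDerivAt (a := (0:ℝ)) (b := L)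
    (f := fun t : ℝ => φ (x + t • η)) (f' := fun s => fderiv ℝ φ (x + s • η) η)
    (fun s _ => hasDerivAt_line x η φ hφ s)
    ((cont_integrand x η φ hφ η).intervalIntegrable 0 L)
  simpa using this

end line

lemma semiLine_eval {d : ℕ} (P xbar : E d) (hP : P ≠ 0)
    (φ : (E d) → ℝ) (hφ : ContDiff ℝ (⊤ : ℕ∞) φ) (hφc : HasCompactSupport φ) (a : Fin d) :
    semiLineDivPair P xbar φ a = P a * φ xbar := by
  set η := ‖P‖⁻¹ • P with hηdef
  have hη : ‖η‖ = 1 := by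
    rw [hηdef, norm_smul, norm_inv, norm_norm, inv_mul_cancel₀ (norm_ne_zero_iff.mpr hP)]
  have key : ∑ b : Fin d, η b *
      (∫ s in Set.Ioi (0:ℝ), fderiv ℝ φ (xbar + s • η) (EuclideanSpace.single b 1))
      = -φ xbar := by
    have hswap : ∑ b : Fin d, η b *
        (∫ s in Set.Ioi (0:ℝ), fderiv ℝ φ (xbar + s • η) (EuclideanSpace.single b 1))
        = ∫ s in Set.Ioi (0:ℝ), ∑ b : Fin d,
          η b * fderiv ℝ φ (xbar + s • η) (EuclideanSpace.single b 1) := by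
      rw [integral_finset_sum]
      · simp_rw [MeasureTheory.integral_const_mul]
      · intro b _
        exact ((integrable_integrand xbar η φ hφ hφc hη _).integrableOn).const_mul _
    rw [hswap]
    rw [show (fun s => ∑ b : Fin d,
        η b * fderiv ℝ φ (xbar + s • η) (EuclideanSpace.single b 1))
      = fun s => fderiv ℝ φ (xbar + s • η) η from funext fun s => fderiv_apply_eta φ _ η]
    exact integral_Ioi_dir xbar η φ hφ hφc hη
  unfold semiLineDivPair
  rw [← hηdef]
  simp_rw [mul_assoc, ← Finset.mul_sum]
  rw [key]; ring

lemma segment_eval {d : ℕ} (Q xj xi : E d) (hQ : Q ≠ 0) (lam : ℝ) (hlam : 0 < lam)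
    (hx : xi - xj = lam • Q)
    (φ : (E d) → ℝ) (hφ : ContDiff ℝ (⊤ : ℕ∞) φ) (hφc : HasCompactSupport φ) (a : Fin d) :
    segmentDivPair Q xj xi φ a = -(Q a * (φ xi - φ xj)) := by
  set η := ‖Q‖⁻¹ • Q with hηdef
  have hQn : ‖Q‖ ≠ 0 := norm_ne_zero_iff.mpr hQ
  have hη : ‖η‖ = 1 := by
    rw [hηdef, norm_smul, norm_inv, norm_norm, inv_mul_cancel₀ hQn]
  have hdist : dist xi xj = lam * ‖Q‖ := by
    rw [dist_eq_norm, hx, norm_smul, Real.norm_eq_abs, abs_of_pos hlam]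
  have hend : xj + (dist xi xj) • η = xi := by
    rw [hdist, hηdef, smul_smul]
    rw [mul_assoc, mul_inv_cancel₀ hQn, mul_one]
    rw [← hx]; abel
  have key : ∑ b : Fin d, η b *
      (∫ s in (0:ℝ)..(dist xi xj), fderiv ℝ φ (xj + s • η) (EuclideanSpace.single b 1))
      = φ xi - φ xj := by
    have hswap : ∑ b : Fin d, η b *
        (∫ s in (0:ℝ)..(dist xi xj), fderiv ℝ φ (xj + s • η) (EuclideanSpace.single b 1))
        = ∫ s in (0:ℝ)..(dist xi xj), ∑ b : Fin d,
          η b * fderiv ℝ φ (xj + s • η) (EuclideanSpace.single b 1) := by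
      rw [intervalIntegral.integral_finset_sum]
      · simp_rw [intervalIntegral.integral_const_mul]
      · intro b _
        exact ((cont_integrand xj η φ hφ _).intervalIntegrable 0 _).const_mul _
    rw [hswap]
    rw [show (fun s => ∑ b : Fin d,
        η b * fderiv ℝ φ (xj + s • η) (EuclideanSpace.single b 1))
      = fun s => fderiv ℝ φ (xj + s • η) η from funext fun s => fderiv_apply_eta φ _ η]
    rw [integral_seg_dir xj η φ hφ (dist xi xj), hend]
  unfold segmentDivPair
  rw [← hηdef]
  simp_rw [mul_assoc, ← Finset.mul_sum]
  rw [key]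

lemma consE_zero {n : ℕ} (c : ℝ) (u : EuclideanSpace ℝ (Fin n)) :
    consE c u 0 = c := rfl

lemma consE_succ {n : ℕ} (c : ℝ) (u : EuclideanSpace ℝ (Fin n)) (j : Fin n) :
    consE c u j.succ = u j := rfl

/-- **The mass-momentum tensor of a binary collision, completed by its colliton, is
divergence-free** (Serre, Section 2.3). With `V₁ = -(1,v)`, `V₂ = -(1,w)`, `V₃ = (1,v')`,
`V₄ = (1,w')`, `Q = (0, v'-v)`, `v + w = v' + w'`, `v' ≠ v`, and points `x̄_i, x̄_j` with
`x̄_i - x̄_j = λQ`, `λ > 0`, the tensor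
`T = S^{V₁+}(x̄_i) + S^{V₂+}(x̄_j) + S^{V₃+}(x̄_i) + S^{V₄+}(x̄_j) + S^{Q,C}` satisfies, for
every test function `φ`,
`⟨Div T, φ⟩ = V₁φ(x̄_i) + V₃φ(x̄_i) + V₂φ(x̄_j) + V₄φ(x̄_j) - Q(φ(x̄_i) - φ(x̄_j)) = 0`. -/
theorem collision_tensor_with_colliton_divergence_free (n : ℕ) (hn : 1 ≤ n)
    (v w v' w' : EuclideanSpace ℝ (Fin n))
    (hmom : v + w = v' + w') (hne : v' ≠ v)
    (xi xj : EuclideanSpace ℝ (Fin (n + 1))) (lam : ℝ) (hlam : 0 < lam)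
    (hx : xi - xj = lam • consE 0 (v' - v))
    (φ : EuclideanSpace ℝ (Fin (n + 1)) → ℝ)
    (hφ : ContDiff ℝ (⊤ : ℕ∞) φ) (hφc : HasCompactSupport φ) (a : Fin (n + 1)) :
    semiLineDivPair (-(consE 1 v)) xi φ a
      + semiLineDivPair (-(consE 1 w)) xj φ a
      + semiLineDivPair (consE 1 v') xi φ a
      + semiLineDivPair (consE 1 w') xj φ a
      + segmentDivPair (consE 0 (v' - v)) xj xi φ a
    = (-(consE 1 v) a + consE 1 v' a) * φ xi
        + (-(consE 1 w) a + consE 1 w' a) * φ xj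
        - consE 0 (v' - v) a * (φ xi - φ xj) ∧
    semiLineDivPair (-(consE 1 v)) xi φ a
      + semiLineDivPair (-(consE 1 w)) xj φ a
      + semiLineDivPair (consE 1 v') xi φ a
      + semiLineDivPair (consE 1 w') xj φ a
      + segmentDivPair (consE 0 (v' - v)) xj xi φ a = 0 := by
  have hne1 : ∀ (c : ℝ) (u : EuclideanSpace ℝ (Fin n)), c ≠ 0 → consE c u ≠ 0 := by
    intro c u hc h
    exact hc (by rw [← consE_zero c u, h]; rfl)
  have hQne : consE 0 (v' - v) ≠ 0 := by
    intro h
    apply hne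
    ext j
    have : consE 0 (v' - v) j.succ = 0 := by rw [h]; rfl
    rw [consE_succ] at this
    have := sub_eq_zero.mp (by simpa using this)
    simpa using this
  rw [semiLine_eval _ _ (by simpa using hne1 1 v one_ne_zero ∘ neg_eq_zero.mp) φ hφ hφc a,
    semiLine_eval _ _ (by simpa using hne1 1 w one_ne_zero ∘ neg_eq_zero.mp) φ hφ hφc a,
    semiLine_eval _ _ (hne1 1 v' one_ne_zero) φ hφ hφc a,
    semiLine_eval _ _ (hne1 1 w' one_ne_zero) φ hφ hφc a,
    segment_eval _ _ _ hQne lam hlam hx φ hφ hφc a]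
  constructor
  · simp only [PiLp.neg_apply]; ring
  · have h1 : -(consE 1 v) a + consE 1 v' a = consE 0 (v' - v) a := by
      induction a using Fin.cases with
      | zero => simp [consE_zero]
      | succ j => simp only [PiLp.neg_apply, consE_succ, PiLp.sub_apply]; ring
    have h2 : -(consE 1 w) a + consE 1 w' a = -consE 0 (v' - v) a := by
      induction a using Fin.cases with
      | zero => simp [consE_zero]
      | succ j =>
        have hj : v j + w j = v' j + w' j := by simpa using congr_arg (fun z : EuclideanSpace ℝ (Fin n) => z j) hmom
        simp only [PiLp.neg_apply, consE_succ, PiLp.sub_apply]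
        linarith
    simp only [PiLp.neg_apply] at h1 h2 ⊢
    linear_combination φ xi * h1 + φ xj * h2

end
end

section
/- Let U ⊆ ℝ^d be open and θ : U → ℝ be of class C³. Then the row-wise divergence of the cofactor (adjugate) matrix of the Hessian of θ vanishes identically: for every index a ∈ {1,…,d} and every x ∈ U, ∑_{b=1}^d ∂_b ( adj(D²θ(x)) )_{ab} = 0. -/
/-! Write `adj(A)_{ab} = det Aᵇ`, where `Aᵇ` is `A` with row `b` replaced by `e_a`. Differentiating
the determinant row by row, `∂_b adj(D²θ)_{ab}` is the sum over `s ≠ b` of the determinants of `D²θ`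
with row `b` replaced by `e_a` and row `s` replaced by `∂_b` of row `s`. Since third derivatives
commute, `∂_b` of row `s` equals `∂_s` of row `b`, so the `(b, s)` and `(s, b)` terms are
determinants of the same matrix up to exchanging rows `b` and `s`, and they cancel. This is the
Piola identity `div cof(Dφ) = 0` for `φ = ∇θ`. -/

open scoped BigOperators

noncomputable section

/-- The Hessian matrix `D²θ(x)` of `θ : ℝ^d → ℝ`, with entries `∂_a ∂_b θ(x)`. -/
def hessian {d : ℕ} (θ : EuclideanSpace ℝ (Fin d) → ℝ) (x : EuclideanSpace ℝ (Fin d)) :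
    Matrix (Fin d) (Fin d) ℝ :=
  Matrix.of fun a b =>
    fderiv ℝ (fun z => fderiv ℝ θ z (EuclideanSpace.single b 1)) x (EuclideanSpace.single a 1)

open Finset

theorem Finset.sum_sum_erase_eq_zero_of_antisymm {ι M : Type*} [DecidableEq ι] [AddCommGroup M]
    (s : Finset ι) (f : ι → ι → M) (hf : ∀ i j, i ≠ j → f i j = -f j i) :
    ∑ i ∈ s, ∑ j ∈ s.erase i, f i j = 0 := by
  rw [← sum_finset_product' s.offDiag s (fun i => s.erase i) fun p => by
    simp only [mem_offDiag, mem_erase]; tauto]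
  refine sum_involution (fun p _ => p.swap) (fun p hp => ?_) (fun p hp _ => ?_)
    (fun p hp => by simpa [and_left_comm, eq_comm] using hp) (fun p _ => rfl)
  · rw [hf p.1 p.2 (mem_offDiag.1 hp).2.2, Prod.fst_swap, Prod.snd_swap, neg_add_cancel]
  · exact fun h => (mem_offDiag.1 hp).2.2 (congrArg Prod.snd h)

namespace Matrix

variable {𝕜 : Type*} [NontriviallyNormedField 𝕜] {n : Type*} [Fintype n] [DecidableEq n]
  {E : Type*} [NormedAddCommGroup E] [NormedSpace 𝕜 E]

def detContinuousMultilinearMap : ContinuousMultilinearMap 𝕜 (fun _ : n => n → 𝕜) 𝕜 :=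
  { (detRowAlternating : (n → 𝕜) [⋀^n]→ₗ[𝕜] 𝕜).toMultilinearMap with
    cont := continuous_id.matrix_det }

theorem fderiv_det_apply {M : E → Matrix n n 𝕜} {x : E}
    (hM : ∀ i, DifferentiableAt 𝕜 (fun z => M z i) x) (v : E) :
    fderiv 𝕜 (fun z => (M z).det) x v =
      ∑ i, (updateRow (M x) i (fderiv 𝕜 (fun z => M z i) x v)).det := by
  have hdet := HasFDerivAt.multilinear_comp (detContinuousMultilinearMap (𝕜 := 𝕜))
    fun i => (hM i).hasFDerivAt
  rw [show (fun z => (M z).det) = fun z => detContinuousMultilinearMap fun i => M z i from rfl,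
    hdet.fderiv]
  simp only [_root_.sum_apply, ContinuousLinearMap.comp_apply,
    ContinuousMultilinearMap.toContinuousLinearMap_apply]
  rfl

theorem fderiv_adjugate_apply {M : E → Matrix n n 𝕜} {x : E}
    (hM : ∀ i, DifferentiableAt 𝕜 (fun z => M z i) x) (v : E) (a b : n) :
    fderiv 𝕜 (fun z => (M z).adjugate a b) x v =
      ∑ i ∈ univ.erase b,
        (updateRow (updateRow (M x) b (Pi.single a 1)) i (fderiv 𝕜 (fun z => M z i) x v)).det := by
  have hrow_b : (fun z => updateRow (M z) b (Pi.single a 1) b) = fun _ => Pi.single a 1 := by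
    funext z; exact updateRow_self
  have hrow_ne : ∀ i ≠ b, (fun z => updateRow (M z) b (Pi.single a 1) i) = fun z => M z i := by
    intro i hi; funext z; exact updateRow_ne hi
  have hN : ∀ i, DifferentiableAt 𝕜 (fun z => updateRow (M z) b (Pi.single a 1) i) x := by
    intro i
    by_cases hi : i = b
    · subst hi; rw [hrow_b]; exact differentiableAt_const _
    · rw [hrow_ne i hi]; exact hM i
  simp_rw [adjugate_apply]
  rw [fderiv_det_apply hN, ← add_sum_erase _ _ (mem_univ b), hrow_b, fderiv_const_apply,
    _root_.zero_apply, det_eq_zero_of_row_eq_zero b fun j => by simp, zero_add]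
  refine sum_congr rfl fun i hi => ?_
  rw [hrow_ne i (ne_of_mem_erase hi)]

theorem det_updateRow_updateRow_swap {R : Type*} [CommRing R] (A : Matrix n n R) {i j : n}
    (hij : i ≠ j) (u w : n → R) :
    (updateRow (updateRow A i u) j w).det = -(updateRow (updateRow A j u) i w).det := by
  have hperm : updateRow (updateRow A j u) i w =
      (updateRow (updateRow A i u) j w).submatrix (Equiv.swap i j) id := by
    ext k l
    rcases eq_or_ne k i with rfl | hki
    · simp
    rcases eq_or_ne k j with rfl | hkj
    · simp [hij, hki]
    · simp [hki, hkj, Equiv.swap_apply_of_ne_of_ne hki hkj]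
  rw [hperm, det_permute, Equiv.Perm.sign_swap hij]
  simp

theorem sum_fderiv_adjugate_eq_zero {M : E → Matrix n n 𝕜} {x : E}
    (hM : ∀ i, DifferentiableAt 𝕜 (fun z => M z i) x) (e : n → E)
    (hsymm : ∀ i j, fderiv 𝕜 (fun z => M z i) x (e j) = fderiv 𝕜 (fun z => M z j) x (e i))
    (a : n) :
    ∑ b, fderiv 𝕜 (fun z => (M z).adjugate a b) x (e b) = 0 := by
  simp_rw [fderiv_adjugate_apply hM]
  refine sum_sum_erase_eq_zero_of_antisymm _ _ fun b i hbi => ?_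
  rw [hsymm, det_updateRow_updateRow_swap _ hbi]

end Matrix

section Hessian

variable {d : ℕ} {θ : EuclideanSpace ℝ (Fin d) → ℝ} {x : EuclideanSpace ℝ (Fin d)}

theorem contDiffAt_fderiv_apply_single (hθ : ContDiffAt ℝ 3 θ x) (c : Fin d) :
    ContDiffAt ℝ 2 (fun z => fderiv ℝ θ z (EuclideanSpace.single c 1)) x :=
  (hθ.fderiv_right (by norm_num)).clm_apply contDiffAt_const

theorem hasFDerivAt_hessian_row (hθ : ContDiffAt ℝ 3 θ x) (s : Fin d) :
    HasFDerivAt (fun z => hessian θ z s)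
      (ContinuousLinearMap.pi fun c =>
        (fderiv ℝ (fderiv ℝ fun z => fderiv ℝ θ z (EuclideanSpace.single c 1)) x).flip
          (EuclideanSpace.single s 1)) x := by
  refine hasFDerivAt_pi.2 fun c => ?_
  have hc := ((contDiffAt_fderiv_apply_single hθ c).fderiv_right le_rfl).differentiableAt
    one_ne_zero
  simpa [hessian] using
    hc.hasFDerivAt.clm_apply (hasFDerivAt_const (EuclideanSpace.single s (1 : ℝ)) x)

theorem fderiv_hessian_row_symm (hθ : ContDiffAt ℝ 3 θ x) (s t : Fin d) :
    fderiv ℝ (fun z => hessian θ z s) x (EuclideanSpace.single t 1) =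
      fderiv ℝ (fun z => hessian θ z t) x (EuclideanSpace.single s 1) := by
  ext c
  simp only [(hasFDerivAt_hessian_row hθ _).fderiv, ContinuousLinearMap.pi_apply,
    ContinuousLinearMap.flip_apply]
  exact (contDiffAt_fderiv_apply_single hθ c).isSymmSndFDerivAt (by simp) _ _

end Hessian

/-- **The cofactor matrix of a Hessian is row-wise divergence-free** (Serre, Section 4.1).
If `θ : U → ℝ` is `C³` on an open set `U ⊆ ℝ^d`, then for every `a` and every `x ∈ U`,
`∑_b ∂_b (adj(D²θ(x)))_{ab} = 0`. -/
theorem adjugate_hessian_divergence_free (d : ℕ) (U : Set (EuclideanSpace ℝ (Fin d)))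
    (hU : IsOpen U) (θ : EuclideanSpace ℝ (Fin d) → ℝ) (hθ : ContDiffOn ℝ 3 θ U)
    (a : Fin d) (x : EuclideanSpace ℝ (Fin d)) (hx : x ∈ U) :
    ∑ b : Fin d,
      fderiv ℝ (fun z => (hessian θ z).adjugate a b) x (EuclideanSpace.single b 1) = 0 := by
  have hθx : ContDiffAt ℝ 3 θ x := hθ.contDiffAt (hU.mem_nhds hx)
  exact Matrix.sum_fderiv_adjugate_eq_zero
    (fun s => (hasFDerivAt_hessian_row hθx s).differentiableAt) _
    (fderiv_hessian_row_symm hθx) a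
end
end

section
/- Let p : ℝ → ℝ be a C² function that is 2π-periodic, and define θ on ℝ²∖{0} by θ(r cos φ, r sin φ) = r·p(φ) for r > 0 and φ ∈ ℝ. Then at every point x = (r cos φ, r sin φ) with r > 0, the cofactor (adjugate) matrix of the Hessian of θ equals (p(φ) + p''(φ)) · (x xᵀ)/|x|³; explicitly, ∂₂₂θ(x) = (p(φ)+p''(φ)) x₁²/|x|³, ∂₁₁θ(x) = (p(φ)+p''(φ)) x₂²/|x|³, and −∂₁₂θ(x) = (p(φ)+p''(φ)) x₁x₂/|x|³. -/
/-!
The polar map `(t, ψ) ↦ (t cos ψ, t sin ψ)` has Jacobian `t`, so by the inverse function theorem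
it is a local diffeomorphism on `t > 0`: a function whose pull-back is differentiable is itself
differentiable. For such a function the radial and angular derivatives `α`, `β` of the pull-back
at `(s, ψ)` determine the gradient, `∂₁ = α cos ψ - (β / s) sin ψ` and `∂₂ = α sin ψ + (β / s) cos ψ`.
Since `θ` pulls back to `t p(ψ)`, this gives `∂₁θ = p cos - p' sin` and `∂₂θ = p sin + p' cos`,
which depend on the angle only. Their angular derivatives are `-(p + p'') sin` and
`(p + p'') cos`, and the same formula once more yields the second partials.
-/

open Real

noncomputable section

/-- First partial derivative `∂₁ f` of `f : ℝ² → ℝ`. -/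
def pd1 (f : ℝ × ℝ → ℝ) (x : ℝ × ℝ) : ℝ := fderiv ℝ f x (1, 0)

/-- Second partial derivative `∂₂ f` of `f : ℝ² → ℝ`. -/
def pd2 (f : ℝ × ℝ → ℝ) (x : ℝ × ℝ) : ℝ := fderiv ℝ f x (0, 1)

open Filter Topology

lemma exists_localInverse_polarCoord_symm {q : ℝ × ℝ} (hq : q.1 ≠ 0) :
    ∃ g : ℝ × ℝ → ℝ × ℝ, DifferentiableAt ℝ g (polarCoord.symm q) ∧
      g (polarCoord.symm q) = q ∧ ∀ᶠ y in 𝓝 (polarCoord.symm q), polarCoord.symm (g y) = y := by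
  have hP : ContDiffAt ℝ 1 polarCoord.symm q := by
    change ContDiffAt ℝ 1 (fun q : ℝ × ℝ => (q.1 * cos q.2, q.1 * sin q.2)) q
    fun_prop
  have hdet : (fderivPolarCoordSymm q).det ≠ 0 := by rwa [det_fderivPolarCoordSymm]
  have hP' : HasFDerivAt polarCoord.symm
      ((fderivPolarCoordSymm q).toContinuousLinearEquivOfDetNeZero hdet : ℝ × ℝ →L[ℝ] ℝ × ℝ) q := by
    simpa using hasFDerivAt_polarCoord_symm q
  exact ⟨_, (hP.to_localInverse hP' one_ne_zero).differentiableAt one_ne_zero,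
    hP.localInverse_apply_image hP' one_ne_zero,
    (hP.hasStrictFDerivAt' hP' one_ne_zero).eventually_right_inverse⟩

lemma differentiableAt_of_forall_polar_eq {E : Type*} [NormedAddCommGroup E] [NormedSpace ℝ E]
    {f : ℝ × ℝ → E} {F : ℝ × ℝ → E}
    (hf : ∀ t > 0, ∀ ψ, f (t * cos ψ, t * sin ψ) = F (t, ψ)) {s ψ : ℝ} (hs : 0 < s)
    (hF : DifferentiableAt ℝ F (s, ψ)) :
    DifferentiableAt ℝ f (s * cos ψ, s * sin ψ) := by
  obtain ⟨g, hg, hgq, hinv⟩ := exists_localInverse_polarCoord_symm (q := (s, ψ)) hs.ne'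
  have hpos : ∀ᶠ y in 𝓝 (polarCoord.symm (s, ψ)), 0 < (g y).1 :=
    continuousAt_const.eventually_lt (continuousAt_fst.comp hg.continuousAt)
      (by simpa only [Function.comp_apply, hgq])
  have hfg : F ∘ g =ᶠ[𝓝 (polarCoord.symm (s, ψ))] f := by
    filter_upwards [hinv, hpos] with y hy hy'
    calc F (g y) = f (polarCoord.symm (g y)) := (hf _ hy' _).symm
      _ = f y := by rw [hy]
  exact ((hgq ▸ hF).comp _ hg).congr_of_eventuallyEq hfg.symm

lemma partials_of_hasDerivAt_polar {f : ℝ × ℝ → ℝ} {s ψ α β : ℝ} (hs : s ≠ 0)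
    (hf : DifferentiableAt ℝ f (s * cos ψ, s * sin ψ))
    (hrad : HasDerivAt (fun t => f (t * cos ψ, t * sin ψ)) α s)
    (hang : HasDerivAt (fun t => f (s * cos t, s * sin t)) β ψ) :
    pd1 f (s * cos ψ, s * sin ψ) = α * cos ψ - β * sin ψ / s ∧
    pd2 f (s * cos ψ, s * sin ψ) = α * sin ψ + β * cos ψ / s := by
  let L := fderiv ℝ f (s * cos ψ, s * sin ψ)
  have hL (u v : ℝ) :
      L (u, v) = u * pd1 f (s * cos ψ, s * sin ψ) + v * pd2 f (s * cos ψ, s * sin ψ) := by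
    have : ((u, v) : ℝ × ℝ) = u • (1, 0) + v • (0, 1) := by simp
    rw [this, map_add, map_smul, map_smul]
    rfl
  have hα : α = L (cos ψ, sin ψ) :=
    hrad.unique (hf.hasFDerivAt.comp_hasDerivAt s
      (((hasDerivAt_id s).mul_const _).prodMk ((hasDerivAt_id s).mul_const _)) |>.congr_deriv
        (by simp [L]))
  have hβ : β = L (-(s * sin ψ), s * cos ψ) :=
    hang.unique (hf.hasFDerivAt.comp_hasDerivAt ψ
      (((hasDerivAt_cos ψ).const_mul s).prodMk ((hasDerivAt_sin ψ).const_mul s)) |>.congr_deriv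
        (by simp [L]))
  rw [hL] at hα hβ
  have hpy := sin_sq_add_cos_sq ψ
  constructor <;> field_simp
  · linear_combination (-s * cos ψ) * hα + sin ψ * hβ - s * pd1 f (s * cos ψ, s * sin ψ) * hpy
  · linear_combination (-s * sin ψ) * hα - cos ψ * hβ - s * pd2 f (s * cos ψ, s * sin ψ) * hpy

section Homogeneous

variable {f : ℝ × ℝ → ℝ} {g : ℝ → ℝ} {s ψ : ℝ}

lemma partials_of_forall_polar_eq_mul (hf : ∀ t > 0, ∀ ψ, f (t * cos ψ, t * sin ψ) = t * g ψ)
    (hs : 0 < s) (hg : DifferentiableAt ℝ g ψ) :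
    pd1 f (s * cos ψ, s * sin ψ) = g ψ * cos ψ - deriv g ψ * sin ψ ∧
    pd2 f (s * cos ψ, s * sin ψ) = g ψ * sin ψ + deriv g ψ * cos ψ := by
  have hfd : DifferentiableAt ℝ f (s * cos ψ, s * sin ψ) :=
    differentiableAt_of_forall_polar_eq (F := fun q => q.1 * g q.2) hf hs
      (differentiableAt_fst.mul (hg.comp _ differentiableAt_snd))
  have hrad : HasDerivAt (fun t => f (t * cos ψ, t * sin ψ)) (g ψ) s :=
    (hasDerivAt_mul_const (g ψ)).congr_of_eventuallyEq <| by
      filter_upwards [Ioi_mem_nhds hs] with t ht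
      exact hf t ht ψ
  have hang : HasDerivAt (fun t => f (s * cos t, s * sin t)) (s * deriv g ψ) ψ :=
    (hg.hasDerivAt.const_mul s).congr_of_eventuallyEq (Eventually.of_forall fun t => hf s hs t)
  obtain ⟨h₁, h₂⟩ := partials_of_hasDerivAt_polar hs.ne' hfd hrad hang
  constructor
  · rw [h₁]; field_simp
  · rw [h₂]; field_simp

lemma partials_of_forall_polar_eq (hf : ∀ t > 0, ∀ ψ, f (t * cos ψ, t * sin ψ) = g ψ)
    (hs : 0 < s) (hg : DifferentiableAt ℝ g ψ) :
    pd1 f (s * cos ψ, s * sin ψ) = -deriv g ψ * sin ψ / s ∧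
    pd2 f (s * cos ψ, s * sin ψ) = deriv g ψ * cos ψ / s := by
  have hfd : DifferentiableAt ℝ f (s * cos ψ, s * sin ψ) :=
    differentiableAt_of_forall_polar_eq (F := fun q => g q.2) hf hs (hg.comp _ differentiableAt_snd)
  have hrad : HasDerivAt (fun t => f (t * cos ψ, t * sin ψ)) 0 s :=
    (hasDerivAt_const s (g ψ)).congr_of_eventuallyEq <| by
      filter_upwards [Ioi_mem_nhds hs] with t ht
      exact hf t ht ψ
  have hang : HasDerivAt (fun t => f (s * cos t, s * sin t)) (deriv g ψ) ψ :=
    hg.hasDerivAt.congr_of_eventuallyEq (Eventually.of_forall fun t => hf s hs t)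
  obtain ⟨h₁, h₂⟩ := partials_of_hasDerivAt_polar hs.ne' hfd hrad hang
  constructor
  · rw [h₁]; ring
  · rw [h₂]; ring

end Homogeneous

section AngularDerivatives

variable {g : ℝ → ℝ} {ψ : ℝ}

lemma hasDerivAt_mul_cos_sub_deriv_mul_sin (hg : DifferentiableAt ℝ g ψ)
    (hg' : DifferentiableAt ℝ (deriv g) ψ) :
    HasDerivAt (fun t => g t * cos t - deriv g t * sin t)
      (-(g ψ + deriv (deriv g) ψ) * sin ψ) ψ :=
  ((hg.hasDerivAt.mul (hasDerivAt_cos ψ)).sub (hg'.hasDerivAt.mul (hasDerivAt_sin ψ))).congr_deriv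
    (by ring)

lemma hasDerivAt_mul_sin_add_deriv_mul_cos (hg : DifferentiableAt ℝ g ψ)
    (hg' : DifferentiableAt ℝ (deriv g) ψ) :
    HasDerivAt (fun t => g t * sin t + deriv g t * cos t)
      ((g ψ + deriv (deriv g) ψ) * cos ψ) ψ :=
  ((hg.hasDerivAt.mul (hasDerivAt_sin ψ)).add (hg'.hasDerivAt.mul (hasDerivAt_cos ψ))).congr_deriv
    (by ring)

end AngularDerivatives

theorem adjugate_hessian_one_homogeneous_planar_general
    (p : ℝ → ℝ) (hp : ContDiff ℝ 2 p)
    (θ : ℝ × ℝ → ℝ)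
    (hθ : ∀ r : ℝ, 0 < r → ∀ φ : ℝ, θ (r * cos φ, r * sin φ) = r * p φ)
    (r : ℝ) (hr : 0 < r) (φ : ℝ) :
    pd2 (pd2 θ) (r * cos φ, r * sin φ)
        = (p φ + deriv (deriv p) φ) * (r * cos φ) ^ 2
            / Real.sqrt ((r * cos φ) ^ 2 + (r * sin φ) ^ 2) ^ 3 ∧
    pd1 (pd1 θ) (r * cos φ, r * sin φ)
        = (p φ + deriv (deriv p) φ) * (r * sin φ) ^ 2
            / Real.sqrt ((r * cos φ) ^ 2 + (r * sin φ) ^ 2) ^ 3 ∧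
    -pd1 (pd2 θ) (r * cos φ, r * sin φ)
        = (p φ + deriv (deriv p) φ) * ((r * cos φ) * (r * sin φ))
            / Real.sqrt ((r * cos φ) ^ 2 + (r * sin φ) ^ 2) ^ 3 := by
  have hp₁ : Differentiable ℝ p := hp.differentiable (by norm_num)
  have hp₂ : Differentiable ℝ (deriv p) := hp.differentiable_deriv_two
  have hθ₁ : ∀ s > 0, ∀ ψ, pd1 θ (s * cos ψ, s * sin ψ) = p ψ * cos ψ - deriv p ψ * sin ψ :=
    fun s hs ψ => (partials_of_forall_polar_eq_mul hθ hs (hp₁ ψ)).1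
  have hθ₂ : ∀ s > 0, ∀ ψ, pd2 θ (s * cos ψ, s * sin ψ) = p ψ * sin ψ + deriv p ψ * cos ψ :=
    fun s hs ψ => (partials_of_forall_polar_eq_mul hθ hs (hp₁ ψ)).2
  have ha := hasDerivAt_mul_cos_sub_deriv_mul_sin (hp₁ φ) (hp₂ φ)
  have hb := hasDerivAt_mul_sin_add_deriv_mul_cos (hp₁ φ) (hp₂ φ)
  obtain ⟨h₁₁, -⟩ := partials_of_forall_polar_eq hθ₁ hr ha.differentiableAt
  obtain ⟨h₂₁, h₂₂⟩ := partials_of_forall_polar_eq hθ₂ hr hb.differentiableAt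
  have hnorm : √((r * cos φ) ^ 2 + (r * sin φ) ^ 2) = r := by
    rw [mul_pow, mul_pow, ← mul_add, cos_sq_add_sin_sq, mul_one, sqrt_sq hr.le]
  rw [ha.deriv] at h₁₁
  rw [hb.deriv] at h₂₁ h₂₂
  rw [hnorm, h₁₁, h₂₁, h₂₂]
  refine ⟨?_, ?_, ?_⟩ <;> field_simp

/-- **The cofactor of the Hessian of a 1-homogeneous planar potential**
(Serre, Proposition 4.1). Let `p` be `C²` and `2π`-periodic, and let
`θ(r cos φ, r sin φ) = r p(φ)` be the associated positively 1-homogeneous function.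
Then at every `x = (r cos φ, r sin φ)` with `r > 0`, the adjugate of the Hessian of `θ`
equals `(p(φ) + p''(φ)) (x xᵀ)/|x|³`: explicitly `∂₂₂θ = (p+p'') x₁²/|x|³`,
`∂₁₁θ = (p+p'') x₂²/|x|³` and `-∂₁₂θ = (p+p'') x₁x₂/|x|³`. -/
theorem adjugate_hessian_one_homogeneous_planar
    (p : ℝ → ℝ) (hp : ContDiff ℝ 2 p) (hper : Function.Periodic p (2 * π))
    (θ : ℝ × ℝ → ℝ)
    (hθ : ∀ r : ℝ, 0 < r → ∀ φ : ℝ, θ (r * cos φ, r * sin φ) = r * p φ)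
    (r : ℝ) (hr : 0 < r) (φ : ℝ) :
    pd2 (pd2 θ) (r * cos φ, r * sin φ)
        = (p φ + deriv (deriv p) φ) * (r * cos φ) ^ 2
            / Real.sqrt ((r * cos φ) ^ 2 + (r * sin φ) ^ 2) ^ 3 ∧
    pd1 (pd1 θ) (r * cos φ, r * sin φ)
        = (p φ + deriv (deriv p) φ) * (r * sin φ) ^ 2
            / Real.sqrt ((r * cos φ) ^ 2 + (r * sin φ) ^ 2) ^ 3 ∧
    -pd1 (pd2 θ) (r * cos φ, r * sin φ)
        = (p φ + deriv (deriv p) φ) * ((r * cos φ) * (r * sin φ))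
            / Real.sqrt ((r * cos φ) ^ 2 + (r * sin φ) ^ 2) ^ 3 :=
  adjugate_hessian_one_homogeneous_planar_general p hp θ hθ r hr φ
end
end

section
/- Let p : ℝ → ℝ be a C² function that is 2π-periodic, and set μ := p + p''. Then the signed area enclosed by the closed curve φ ↦ (p(φ)cos φ − p'(φ)sin φ, p(φ)sin φ + p'(φ)cos φ), computed as ½∫_0^{2π} (p(φ)cos φ − p'(φ)sin φ)·(p(φ)+p''(φ))·cos φ dφ, equals (1/8) ∫_0^{2π} ∫_0^{2π} μ(s₁) μ(s₂) sin|s₂ − s₁| ds₁ ds₂. -/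
/-! Write `μ = p + p''` and `(X, Y)` for the curve. Then `X' = -μ sin`, `Y' = μ cos` and
`X cos + Y sin = p`, so `(XY)' = 2 X μ cos - μ p`; over a period the left-hand side is therefore
`¼ ∫ μ p`. On the right, `½ sin |s|` is a fundamental solution of `h ↦ h + h''`, so the inner
integral equals `2 (p t - X(0) cos t - Y(0) sin t)`, and the first harmonics integrate to zero
against `μ` because `∫ μ cos = [Y]` and `∫ μ sin = -[X]` vanish over a period. Hence the
right-hand side is `¼ ∫ μ p` as well. -/

open Real Function Set intervalIntegral

theorem Function.Periodic.deriv {𝕜 F : Type*} [NontriviallyNormedField 𝕜] [NormedAddCommGroup F]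
    [NormedSpace 𝕜 F] {f : 𝕜 → F} {c : 𝕜} (hf : Periodic f c) : Periodic (deriv f) c := by
  intro x
  rw [← deriv_comp_add_const, show (fun y ↦ f (y + c)) = f from funext hf]

/-- The paper's `μ`; for a support function `p` it is the radius of curvature. -/
noncomputable def radiusOfCurvature (p : ℝ → ℝ) (φ : ℝ) : ℝ := p φ + deriv (deriv p) φ

noncomputable def supportCurveX (p : ℝ → ℝ) (φ : ℝ) : ℝ := p φ * cos φ - deriv p φ * sin φ

noncomputable def supportCurveY (p : ℝ → ℝ) (φ : ℝ) : ℝ := p φ * sin φ + deriv p φ * cos φ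

section

variable {p : ℝ → ℝ}

theorem supportCurveX_mul_cos_add_supportCurveY_mul_sin (p : ℝ → ℝ) (φ : ℝ) :
    supportCurveX p φ * cos φ + supportCurveY p φ * sin φ = p φ := by
  unfold supportCurveX supportCurveY
  linear_combination p φ * sin_sq_add_cos_sq φ

theorem continuous_radiusOfCurvature (hp : ContDiff ℝ 2 p) : Continuous (radiusOfCurvature p) := by
  unfold radiusOfCurvature
  fun_prop

theorem hasDerivAt_supportCurveX (hp : ContDiff ℝ 2 p) (φ : ℝ) :
    HasDerivAt (supportCurveX p) (-(radiusOfCurvature p φ * sin φ)) φ := by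
  have hp' := (hp.differentiable two_ne_zero φ).hasDerivAt
  have hp'' := (hp.differentiable_deriv_two φ).hasDerivAt
  exact ((hp'.mul (hasDerivAt_cos φ)).sub (hp''.mul (hasDerivAt_sin φ))).congr_deriv
    (by unfold radiusOfCurvature; ring)

theorem hasDerivAt_supportCurveY (hp : ContDiff ℝ 2 p) (φ : ℝ) :
    HasDerivAt (supportCurveY p) (radiusOfCurvature p φ * cos φ) φ := by
  have hp' := (hp.differentiable two_ne_zero φ).hasDerivAt
  have hp'' := (hp.differentiable_deriv_two φ).hasDerivAt
  exact ((hp'.mul (hasDerivAt_sin φ)).add (hp''.mul (hasDerivAt_cos φ))).congr_deriv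
    (by unfold radiusOfCurvature; ring)

theorem periodic_supportCurveX (hper : Periodic p (2 * π)) :
    Periodic (supportCurveX p) (2 * π) := by
  intro φ
  simp only [supportCurveX, hper φ, hper.deriv φ, cos_periodic φ, sin_periodic φ]

theorem periodic_supportCurveY (hper : Periodic p (2 * π)) :
    Periodic (supportCurveY p) (2 * π) := by
  intro φ
  simp only [supportCurveY, hper φ, hper.deriv φ, cos_periodic φ, sin_periodic φ]

theorem integral_radiusOfCurvature_mul_cos_add_sin (hp : ContDiff ℝ 2 p) (a b c₁ c₂ : ℝ) :
    ∫ s in a..b, radiusOfCurvature p s * (c₁ * cos s + c₂ * sin s)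
      = c₁ * (supportCurveY p b - supportCurveY p a)
        - c₂ * (supportCurveX p b - supportCurveX p a) := by
  have hderiv (s : ℝ) (_ : s ∈ uIcc a b) :
      HasDerivAt (fun s ↦ c₁ * supportCurveY p s - c₂ * supportCurveX p s)
        (radiusOfCurvature p s * (c₁ * cos s + c₂ * sin s)) s :=
    (((hasDerivAt_supportCurveY hp s).const_mul c₁).sub
      ((hasDerivAt_supportCurveX hp s).const_mul c₂)).congr_deriv (by ring)
  have hμ := continuous_radiusOfCurvature hp
  rw [integral_eq_sub_of_hasDerivAt hderiv (by apply Continuous.intervalIntegrable; fun_prop)]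
  ring

theorem integral_radiusOfCurvature_mul_cos_add_sin_eq_zero (hp : ContDiff ℝ 2 p)
    (hper : Periodic p (2 * π)) (c₁ c₂ : ℝ) :
    ∫ s in 0..2 * π, radiusOfCurvature p s * (c₁ * cos s + c₂ * sin s) = 0 := by
  rw [integral_radiusOfCurvature_mul_cos_add_sin hp, (periodic_supportCurveX hper).eq,
    (periodic_supportCurveY hper).eq]
  ring

theorem integral_radiusOfCurvature_mul_sin_abs_sub (hp : ContDiff ℝ 2 p)
    (hper : Periodic p (2 * π)) {t : ℝ} (ht : t ∈ Icc 0 (2 * π)) :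
    ∫ s in 0..2 * π, radiusOfCurvature p s * sin |s - t|
      = 2 * (p t - (supportCurveX p 0 * cos t + supportCurveY p 0 * sin t)) := by
  have hμ := continuous_radiusOfCurvature hp
  have hleft : ∫ s in 0..t, radiusOfCurvature p s * sin |s - t|
      = ∫ s in 0..t, radiusOfCurvature p s * (sin t * cos s + -cos t * sin s) := by
    refine integral_congr fun s hs ↦ ?_
    rw [uIcc_of_le ht.1] at hs
    simp only [abs_of_nonpos (sub_nonpos.2 hs.2), neg_sub, sin_sub]
    ring
  have hright : ∫ s in t..2 * π, radiusOfCurvature p s * sin |s - t|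
      = ∫ s in t..2 * π, radiusOfCurvature p s * (-sin t * cos s + cos t * sin s) := by
    refine integral_congr fun s hs ↦ ?_
    rw [uIcc_of_le ht.2] at hs
    simp only [abs_of_nonneg (sub_nonneg.2 hs.1), sin_sub]
    ring
  rw [← integral_add_adjacent_intervals (b := t) (by apply Continuous.intervalIntegrable; fun_prop)
    (by apply Continuous.intervalIntegrable; fun_prop), hleft, hright,
    integral_radiusOfCurvature_mul_cos_add_sin hp, integral_radiusOfCurvature_mul_cos_add_sin hp,
    (periodic_supportCurveX hper).eq, (periodic_supportCurveY hper).eq,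
    ← supportCurveX_mul_cos_add_supportCurveY_mul_sin p t]
  ring

theorem two_mul_integral_supportCurveX_mul_radiusOfCurvature_mul_cos (hp : ContDiff ℝ 2 p)
    (a b : ℝ) :
    2 * ∫ φ in a..b, supportCurveX p φ * radiusOfCurvature p φ * cos φ
      = (∫ φ in a..b, radiusOfCurvature p φ * p φ)
        + (supportCurveX p b * supportCurveY p b - supportCurveX p a * supportCurveY p a) := by
  have hderiv (φ : ℝ) (_ : φ ∈ uIcc a b) :
      HasDerivAt (fun φ ↦ supportCurveX p φ * supportCurveY p φ)
        (2 * (supportCurveX p φ * radiusOfCurvature p φ * cos φ) - radiusOfCurvature p φ * p φ) φ :=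
    ((hasDerivAt_supportCurveX hp φ).mul (hasDerivAt_supportCurveY hp φ)).congr_deriv (by
      rw [← supportCurveX_mul_cos_add_supportCurveY_mul_sin p φ]; ring)
  have hμ := continuous_radiusOfCurvature hp
  have hX : Continuous (supportCurveX p) :=
    continuous_iff_continuousAt.2 fun φ ↦ (hasDerivAt_supportCurveX hp φ).continuousAt
  have := integral_eq_sub_of_hasDerivAt hderiv (by apply Continuous.intervalIntegrable; fun_prop)
  rw [integral_sub (by apply Continuous.intervalIntegrable; fun_prop)
    (by apply Continuous.intervalIntegrable; fun_prop), integral_const_mul] at this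
  linarith

end

/-- **The determinantal mass formula in the plane** (Serre, Proposition 4.1,
formula (4.3)). Let `p` be `C²` and `2π`-periodic and `μ = p + p''`. The signed area
enclosed by the curve `φ ↦ (p cos φ - p' sin φ, p sin φ + p' cos φ)`, computed as
`½ ∫_0^{2π} (p cos φ - p' sin φ)(p + p'') cos φ dφ`, equals
`(1/8) ∫_0^{2π} ∫_0^{2π} μ(s₁) μ(s₂) sin|s₂ - s₁| ds₁ ds₂`. -/
theorem determinantal_mass_formula_planar (p : ℝ → ℝ)
    (hp : ContDiff ℝ 2 p) (hper : Function.Periodic p (2 * π)) :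
    (1 / 2) * ∫ φ in (0 : ℝ)..(2 * π),
        (p φ * cos φ - deriv p φ * sin φ) * (p φ + deriv (deriv p) φ) * cos φ
      = (1 / 8) * ∫ s₁ in (0 : ℝ)..(2 * π), ∫ s₂ in (0 : ℝ)..(2 * π),
          (p s₁ + deriv (deriv p) s₁) * (p s₂ + deriv (deriv p) s₂) * sin |s₂ - s₁| := by
  set μ := radiusOfCurvature p
  set X := supportCurveX p
  set Y := supportCurveY p
  have hμ : Continuous μ := continuous_radiusOfCurvature hp
  have area : 2 * ∫ φ in 0..2 * π, X φ * μ φ * cos φ = ∫ φ in 0..2 * π, μ φ * p φ := by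
    rw [two_mul_integral_supportCurveX_mul_radiusOfCurvature_mul_cos hp,
      (periodic_supportCurveX hper).eq, (periodic_supportCurveY hper).eq, sub_self, add_zero]
  have kernel : ∫ s₁ in 0..2 * π, ∫ s₂ in 0..2 * π, μ s₁ * μ s₂ * sin |s₂ - s₁|
      = ∫ s₁ in 0..2 * π, 2 * (μ s₁ * p s₁) - 2 * (μ s₁ * (X 0 * cos s₁ + Y 0 * sin s₁)) := by
    refine integral_congr fun t ht ↦ ?_
    simp only [mul_assoc, integral_const_mul]
    rw [integral_radiusOfCurvature_mul_sin_abs_sub hp hper (uIcc_of_le two_pi_pos.le ▸ ht)]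
    ring
  change (1 / 2) * ∫ φ in 0..2 * π, X φ * μ φ * cos φ
    = (1 / 8) * ∫ s₁ in 0..2 * π, ∫ s₂ in 0..2 * π, μ s₁ * μ s₂ * sin |s₂ - s₁|
  rw [kernel, integral_sub (by apply Continuous.intervalIntegrable; fun_prop)
    (by apply Continuous.intervalIntegrable; fun_prop), integral_const_mul, integral_const_mul,
    integral_radiusOfCurvature_mul_cos_add_sin_eq_zero hp hper, ← area]
  ring
end

section
/- Let V, W, Z ∈ ℝ²∖{0} satisfy V + W + Z = 0, and write V = |V|(cos α, sin α), W = |W|(cos β, sin β), Z = |Z|(cos γ, sin γ) with 0 ≤ α < β < γ < 2π. Then β − α ∈ (0,π), γ − β ∈ (0,π), γ − α ∈ (π, 2π), and (1/4)( |V|·|W| sin(β−α) + |W|·|Z| sin(γ−β) + |Z|·|V| sin(γ−α) ) = (1/4) |det(V,W)|, where det(V,W) = V₁W₂ − V₂W₁. Equivalently, the determinantal mass at the meeting point of the divergence-free tensor Λ = S^V + S^W + S^Z formed by three converging lines of directions V, W, Z equals (1/4)|det(V,W)|, an expression symmetric in V, W, Z. -/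
open Real

/-!
Writing `det(u, v) = u₀v₁ - u₁v₀`, the polar forms give `det(V, W) = |V||W| sin(β - α)`,
`det(W, Z) = |W||Z| sin(γ - β)` and `det(Z, V) = -|Z||V| sin(γ - α)`, while `V + W + Z = 0`
makes the three determinants equal to one number `D`. The angles `β - α` and `γ - β` are
positive with sum below `2π`, so one of their sines is positive; hence `D > 0`, which pins
down the three angle ranges, and the left-hand side is `(D + D - D) / 4 = |D| / 4`.
-/

lemma Real.sin_pos_iff_lt_pi {x : ℝ} (h0 : 0 < x) (h2 : x < 2 * π) : 0 < sin x ↔ x < π := by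
  refine ⟨fun hs => ?_, sin_pos_of_pos_of_lt_pi h0⟩
  by_contra! hx
  have : 0 ≤ sin (x - π) := sin_nonneg_of_nonneg_of_le_pi (by linarith) (by linarith)
  rw [sin_sub_pi] at this
  linarith

lemma Real.sin_neg_iff_pi_lt {x : ℝ} (h0 : 0 < x) (h2 : x < 2 * π) : sin x < 0 ↔ π < x := by
  refine ⟨fun hs => ?_, fun hx => ?_⟩
  · by_contra! hx
    linarith [sin_nonneg_of_nonneg_of_le_pi h0.le hx]
  · have : 0 < sin (x - π) := sin_pos_of_pos_of_lt_pi (by linarith) (by linarith)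
    rwa [sin_sub_pi, neg_pos] at this

lemma Real.sin_pos_or_sin_pos_of_add_lt_two_pi {x y : ℝ} (hx : 0 < x) (hy : 0 < y)
    (hxy : x + y < 2 * π) : 0 < sin x ∨ 0 < sin y := by
  by_contra! h
  have hx' : π ≤ x := not_lt.mp fun hlt => h.1.not_gt (sin_pos_of_pos_of_lt_pi hx hlt)
  have hy' : π ≤ y := not_lt.mp fun hlt => h.2.not_gt (sin_pos_of_pos_of_lt_pi hy hlt)
  linarith

def planeDet (u v : EuclideanSpace ℝ (Fin 2)) : ℝ := u 0 * v 1 - u 1 * v 0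

lemma planeDet_of_polar {u v : EuclideanSpace ℝ (Fin 2)} {r s a b : ℝ}
    (hu : u 0 = r * cos a ∧ u 1 = r * sin a) (hv : v 0 = s * cos b ∧ v 1 = s * sin b) :
    planeDet u v = r * s * sin (b - a) := by
  rw [planeDet, hu.1, hu.2, hv.1, hv.2, sin_sub]
  ring

lemma planeDet_eq_of_add_add_eq_zero {u v w : EuclideanSpace ℝ (Fin 2)} (h : u + v + w = 0) :
    planeDet u v = planeDet v w := by
  have h0 : u 0 + v 0 + w 0 = 0 := by simpa using congrArg (· 0) h
  have h1 : u 1 + v 1 + w 1 = 0 := by simpa using congrArg (· 1) h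
  rw [planeDet, planeDet, show w 0 = -(u 0 + v 0) by linarith, show w 1 = -(u 1 + v 1) by linarith]
  ring

/-- **Determinantal mass of three converging lines** (Serre, Corollary 4.1).
Let `V, W, Z ∈ ℝ²∖{0}` satisfy `V + W + Z = 0`, with polar angles
`0 ≤ α < β < γ < 2π`. Then `β - α ∈ (0,π)`, `γ - β ∈ (0,π)`, `γ - α ∈ (π, 2π)`, and
`¼(|V||W| sin(β-α) + |W||Z| sin(γ-β) + |Z||V| sin(γ-α)) = ¼ |det(V,W)|`;
this quantity is the determinantal mass of `Λ = S^V + S^W + S^Z` at the meeting point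
and is symmetric in `V, W, Z`. -/
theorem determinantal_mass_three_lines (V W Z : EuclideanSpace ℝ (Fin 2))
    (hV : V ≠ 0) (hW : W ≠ 0) (hZ : Z ≠ 0) (hsum : V + W + Z = 0)
    (α β γ : ℝ) (hα : 0 ≤ α) (hαβ : α < β) (hβγ : β < γ) (hγ : γ < 2 * π)
    (hVpolar : V 0 = ‖V‖ * cos α ∧ V 1 = ‖V‖ * sin α)
    (hWpolar : W 0 = ‖W‖ * cos β ∧ W 1 = ‖W‖ * sin β)
    (hZpolar : Z 0 = ‖Z‖ * cos γ ∧ Z 1 = ‖Z‖ * sin γ) :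
    β - α ∈ Set.Ioo 0 π ∧ γ - β ∈ Set.Ioo 0 π ∧ γ - α ∈ Set.Ioo π (2 * π) ∧
    (1 / 4) * (‖V‖ * ‖W‖ * sin (β - α) + ‖W‖ * ‖Z‖ * sin (γ - β)
        + ‖Z‖ * ‖V‖ * sin (γ - α))
      = (1 / 4) * |V 0 * W 1 - V 1 * W 0| := by
  have hVW : planeDet V W = ‖V‖ * ‖W‖ * sin (β - α) := planeDet_of_polar hVpolar hWpolar
  have hWZ : planeDet V W = ‖W‖ * ‖Z‖ * sin (γ - β) :=
    (planeDet_eq_of_add_add_eq_zero hsum).trans (planeDet_of_polar hWpolar hZpolar)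
  have hZV : planeDet V W = -(‖Z‖ * ‖V‖ * sin (γ - α)) := by
    have hsum' : W + Z + V = 0 := by rw [← hsum]; abel
    rw [planeDet_eq_of_add_add_eq_zero hsum, planeDet_eq_of_add_add_eq_zero hsum',
      planeDet_of_polar hZpolar hVpolar, ← neg_sub γ α, sin_neg, mul_neg]
  have hD : 0 < planeDet V W := by
    rcases sin_pos_or_sin_pos_of_add_lt_two_pi (sub_pos.2 hαβ) (sub_pos.2 hβγ) (by linarith)
      with h | h
    · rw [hVW]; positivity
    · rw [hWZ]; positivity
  have hsVW : 0 < sin (β - α) := pos_of_mul_pos_right (hVW ▸ hD) (by positivity)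
  have hsWZ : 0 < sin (γ - β) := pos_of_mul_pos_right (hWZ ▸ hD) (by positivity)
  have hsZV : sin (γ - α) < 0 :=
    neg_of_mul_neg_right (a := ‖Z‖ * ‖V‖) (by linarith) (by positivity)
  refine ⟨⟨sub_pos.2 hαβ, (sin_pos_iff_lt_pi (by linarith) (by linarith)).1 hsVW⟩,
    ⟨sub_pos.2 hβγ, (sin_pos_iff_lt_pi (by linarith) (by linarith)).1 hsWZ⟩,
    ⟨(sin_neg_iff_pi_lt (by linarith) (by linarith)).1 hsZV, by linarith⟩, ?_⟩
  rw [← planeDet, abs_of_pos hD]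
  linarith
end
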